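/- arXiv:2406.18035 — 6 statements merged into one kernel-verified Lean document; each statement's English description precedes it below -/
import Mathlib

section
/- Let f_θ be a differentiable model with M parameters, f* ∈ F a target function, θ* ∈ M_{f*}, and S = {(x_i, f*(x_i))}_{i=1}^n a dataset. Then f* has an LLR-guarantee at θ* from S if and only if the empirical model rank rank_S(θ*) equals the model rank rank_{f_θ}(θ*). -/
open scoped BigOperators

section Core

variable {α : Type*} {ι : Type*} [Fintype ι] [DecidableEq ι]

/-- Partial derivative of the model output w.r.t. parameter `i`, as a function of the input. -/
noncomputable def pgrad (f : α → (ι → ℝ) → ℝ) (θ : ι → ℝ) (i : ι) : α → ℝ :=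
  fun x => fderiv ℝ (f x) θ (Pi.single i 1)

/-- The tangent function hyperplane at parameter `θ`. -/
noncomputable def tangentSet (f : α → (ι → ℝ) → ℝ) (θ : ι → ℝ) : Set (α → ℝ) :=
  {g | ∃ a : ι → ℝ, g = fun x => f x θ + ∑ i, a i * pgrad f θ i x}

/-- A continuously differentiable distance-type loss. -/
def IsDistanceLoss (ℓ : ℝ → ℝ → ℝ) : Prop :=
  ContDiff ℝ 1 (Function.uncurry ℓ) ∧ ∀ y y' : ℝ, 0 ≤ ℓ y y' ∧ (ℓ y y' = 0 ↔ y = y')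

/-- The empirical loss of `g` on the dataset sampled from `fstar` at inputs `X`. -/
noncomputable def empLoss (ℓ : ℝ → ℝ → ℝ) {n : ℕ} (X : Fin n → α) (fstar g : α → ℝ) : ℝ :=
  (1 / n : ℝ) * ∑ i, ℓ (g (X i)) (fstar (X i))

/-- `fstar` has LLR-guarantee at `θ` from the dataset with inputs `X`:
`fstar` is the unique minimizer of the empirical loss over the tangent hyperplane at `θ`. -/
def LLRAt (ℓ : ℝ → ℝ → ℝ) (f : α → (ι → ℝ) → ℝ) (θ : ι → ℝ)
    {n : ℕ} (X : Fin n → α) (fstar : α → ℝ) : Prop :=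
  fstar ∈ tangentSet f θ ∧
  (∀ h ∈ tangentSet f θ, empLoss ℓ X fstar fstar ≤ empLoss ℓ X fstar h) ∧
  (∀ g ∈ tangentSet f θ,
    (∀ h ∈ tangentSet f θ, empLoss ℓ X fstar g ≤ empLoss ℓ X fstar h) → g = fstar)

/-- `fstar` has an `n`-sample LLR-guarantee. -/
def HasLLR (ℓ : ℝ → ℝ → ℝ) (f : α → (ι → ℝ) → ℝ) (fstar : α → ℝ) (n : ℕ) : Prop :=
  ∃ X : Fin n → α, ∃ θ : ι → ℝ, (fun x => f x θ) = fstar ∧ LLRAt ℓ f θ X fstar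

/-- Model rank at a parameter point: dimension of the span of the tangent functions. -/
noncomputable def modelRankAt (f : α → (ι → ℝ) → ℝ) (θ : ι → ℝ) : ℕ :=
  Module.finrank ℝ (Submodule.span ℝ (Set.range (pgrad f θ)))

/-- Model rank of a function: minimum model rank over parameters representing it. -/
noncomputable def modelRank (f : α → (ι → ℝ) → ℝ) (fstar : α → ℝ) : ℕ :=
  sInf {r | ∃ θ : ι → ℝ, (fun x => f x θ) = fstar ∧ modelRankAt f θ = r}

/-- Empirical model rank: rank of the empirical tangent matrix. -/
noncomputable def empRank (f : α → (ι → ℝ) → ℝ) (θ : ι → ℝ) {n : ℕ} (X : Fin n → α) : ℕ :=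
  (Matrix.of fun (i : ι) (j : Fin n) => pgrad f θ i (X j)).rank

/-- Optimistic sample size: the smallest sample size with LLR-guarantee. -/
noncomputable def optSampleSize (ℓ : ℝ → ℝ → ℝ) (f : α → (ι → ℝ) → ℝ) (fstar : α → ℝ) : ℕ :=
  sInf {n | HasLLR ℓ f fstar n}

end Core

/-- LLR-guarantee at `θs` from the dataset holds iff the empirical model rank
equals the model rank at `θs`. -/
theorem llr_condition {d M n : ℕ} (ℓ : ℝ → ℝ → ℝ) (hℓ : IsDistanceLoss ℓ)
    (f : (Fin d → ℝ) → (Fin M → ℝ) → ℝ) (hdiff : ∀ x, Differentiable ℝ (f x))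
    (θs : Fin M → ℝ) (fstar : (Fin d → ℝ) → ℝ)
    (htarget : (fun x => f x θs) = fstar) (X : Fin n → Fin d → ℝ) :
    LLRAt ℓ f θs X fstar ↔ empRank f θs X = modelRankAt f θs := by
  classical
  set v : Fin M → (Fin d → ℝ) → ℝ := pgrad f θs with hv
  -- the linear map a ↦ ∑ i, a i • v i
  let φ : (Fin M → ℝ) →ₗ[ℝ] ((Fin d → ℝ) → ℝ) :=
    { toFun := fun a x => ∑ i, a i * v i x
      map_add' := by
        intro a b; funext x
        simp [add_mul, Finset.sum_add_distrib]
      map_smul' := by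
        intro c a; funext x
        simp [Finset.mul_sum, mul_assoc] }
  let A : Matrix (Fin M) (Fin n) ℝ := Matrix.of fun i j => v i (X j)
  let φS : (Fin M → ℝ) →ₗ[ℝ] (Fin n → ℝ) := A.transpose.mulVecLin
  have hφS : ∀ a j, φS a j = ∑ i, a i * v i (X j) := by
    intro a j
    simp only [φS, Matrix.mulVecLin_apply, Matrix.mulVec, dotProduct,
      Matrix.transpose_apply, A, Matrix.of_apply]
    exact Finset.sum_congr rfl fun i _ => mul_comm _ _
  have hfstar : ∀ x, fstar x = f x θs := fun x => (congrFun htarget x).symm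
  -- loss facts
  have hnonneg : ∀ g : (Fin d → ℝ) → ℝ, 0 ≤ empLoss ℓ X fstar g := by
    intro g
    unfold empLoss
    apply mul_nonneg (by positivity)
    exact Finset.sum_nonneg fun j _ => (hℓ.2 _ _).1
  have hzero : ∀ g : (Fin d → ℝ) → ℝ, (∀ j, g (X j) = fstar (X j)) →
      empLoss ℓ X fstar g = 0 := by
    intro g hg
    unfold empLoss
    rw [Finset.sum_eq_zero fun j _ => (hℓ.2 _ _).2.mpr (hg j), mul_zero]
  have hfstar0 : empLoss ℓ X fstar fstar = 0 := hzero _ fun _ => rfl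
  -- membership characterization
  have hmemT : ∀ a : Fin M → ℝ, (fun x => f x θs + φ a x) ∈ tangentSet f θs := by
    intro a; exact ⟨a, rfl⟩
  have hfstarT : fstar ∈ tangentSet f θs := by
    refine ⟨0, ?_⟩
    funext x
    simp [pgrad, hfstar x]
  -- kernel inclusion
  have hkerle : LinearMap.ker φ ≤ LinearMap.ker φS := by
    intro a ha
    rw [LinearMap.mem_ker] at ha ⊢
    funext j
    rw [hφS]
    have := congrFun ha (X j)
    simpa [φ] using this
  -- LLR ↔ ker φS ≤ ker φ
  have hLLR_iff : LLRAt ℓ f θs X fstar ↔ ∀ a : Fin M → ℝ, φS a = 0 → φ a = 0 := by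
    constructor
    · intro hL a ha
      have hg0 : empLoss ℓ X fstar (fun x => f x θs + φ a x) = 0 := by
        apply hzero
        intro j
        have h1 : φ a (X j) = 0 := by
          have := congrFun ha j
          rw [hφS] at this
          exact this
        simp [h1, hfstar (X j)]
      have := hL.2.2 (fun x => f x θs + φ a x) (hmemT a)
        (fun h hh => by rw [hg0]; exact hnonneg h)
      funext x
      have hx := congrFun this x
      have : f x θs + φ a x = f x θs := by rw [hx, hfstar x]
      simpa using this
    · intro hc
      refine ⟨hfstarT, fun h _ => by rw [hfstar0]; exact hnonneg h, ?_⟩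
      rintro g ⟨a, rfl⟩ hmin
      have hSa : φS a = 0 := by
        funext j
        rcases Nat.eq_zero_or_pos n with hn | hn
        · exact absurd (j.isLt) (by omega)
        · have hle : empLoss ℓ X fstar (fun x => f x θs + ∑ i, a i * pgrad f θs i x)
              ≤ 0 := by
            rw [← hfstar0]; exact hmin fstar hfstarT
          have hsum0 : ∑ j', ℓ ((f (X j') θs + ∑ i, a i * pgrad f θs i (X j'))) (fstar (X j')) = 0 := by
            have hpos : (0:ℝ) < 1 / n := by positivity
            have hsum_nonneg : 0 ≤ ∑ j', ℓ ((f (X j') θs + ∑ i, a i * pgrad f θs i (X j'))) (fstar (X j')) :=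
              Finset.sum_nonneg fun j' _ => (hℓ.2 _ _).1
            unfold empLoss at hle
            nlinarith
          have heach := (Finset.sum_eq_zero_iff_of_nonneg
            (fun j' _ => (hℓ.2 _ _).1)).mp hsum0 j (Finset.mem_univ j)
          have hpt : f (X j) θs + ∑ i, a i * pgrad f θs i (X j) = fstar (X j) :=
            (hℓ.2 _ _).2.mp heach
          rw [hfstar (X j)] at hpt
          rw [hφS]
          have : (∑ i, a i * pgrad f θs i (X j)) = 0 := by linarith
          simpa [hv] using this
      have hfa : φ a = 0 := hc a hSa
      funext x
      have hx : (∑ i, a i * pgrad f θs i x) = 0 := by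
        have := congrFun hfa x
        simpa [hv, φ] using this
      rw [hx, add_zero, hfstar x]
  -- rank identities
  have hemp : empRank f θs X = Module.finrank ℝ (LinearMap.range φS) := by
    have h1 : empRank f θs X = A.rank := rfl
    rw [h1, ← Matrix.rank_transpose]
    rfl
  have hspan : Submodule.span ℝ (Set.range (pgrad f θs)) = LinearMap.range φ := by
    apply le_antisymm
    · rw [Submodule.span_le]
      rintro _ ⟨i, rfl⟩
      refine ⟨Pi.single i 1, ?_⟩
      funext x
      simp [φ, Pi.single_apply, Finset.sum_ite_eq', hv]
    · rintro _ ⟨a, rfl⟩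
      have : φ a = ∑ i, a i • v i := by
        funext x
        simp [φ]
      rw [this]
      exact Submodule.sum_mem _ fun i _ =>
        Submodule.smul_mem _ _ (Submodule.subset_span ⟨i, rfl⟩)
  have hmodel : modelRankAt f θs = Module.finrank ℝ (LinearMap.range φ) := by
    unfold modelRankAt
    rw [hspan]
  -- rank-nullity
  have hrnS := LinearMap.finrank_range_add_finrank_ker φS
  have hrn := LinearMap.finrank_range_add_finrank_ker φ
  rw [hLLR_iff, hemp, hmodel]
  constructor
  · intro hc
    have hker : LinearMap.ker φS = LinearMap.ker φ := by
      apply le_antisymm _ hkerle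
      intro a ha
      rw [LinearMap.mem_ker] at ha ⊢
      exact hc a ha
    rw [hker] at hrnS
    omega
  · intro hr
    have hker : LinearMap.ker φ = LinearMap.ker φS := by
      apply Submodule.eq_of_le_of_finrank_eq hkerle
      omega
    intro a ha
    have : a ∈ LinearMap.ker φ := by rw [hker]; exact LinearMap.mem_ker.mpr ha
    exact LinearMap.mem_ker.mp this
end

section
/- Let f_θ be a differentiable model and θ' a parameter point with f(·;θ') = f*. If the sample size n < rank_{f_θ}(θ'), then for every n-sample dataset sampled from f*, f* has no LLR-guarantee at θ'. Conversely, if n ≥ rank_{f_θ}(θ'), there exist inputs x_1, …, x_n such that f* has LLR-guarantee at θ' from S = {(x_i, f*(x_i))}. -/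
open scoped BigOperators

/-!
Because the loss is a distance, `fstar` itself (a point of the tangent hyperplane) attains empirical
loss `0`, so the minimizers on the hyperplane are exactly its points that agree with `fstar` on the
sample. Writing these points as `fstar + v` with `v` in the span `V` of the tangent functions, the
LLR-guarantee says that no nonzero `v ∈ V` vanishes on the sample, i.e. that evaluation at the
sample is injective on `V`. An injective linear map `V → ℝⁿ` forces `dim V ≤ n`; conversely, as
long as `V ≠ 0` one can pick a point where some `v ∈ V` is nonzero, which drops the dimension of the
subspace vanishing there by one, so `dim V` points suffice.
-/

section Evaluation

variable {K α : Type*} [Field K]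

theorem Submodule.finrank_le_of_disjoint_ker_funLeft {V : Submodule K (α → K)} {n : ℕ}
    {X : Fin n → α} (hX : Disjoint V (LinearMap.ker (LinearMap.funLeft K K X))) :
    Module.finrank K V ≤ n :=
  (LinearMap.finrank_le_finrank_of_injective (LinearMap.injective_domRestrict_iff.2 hX)).trans_eq
    (Module.finrank_fin_fun K)

theorem Submodule.exists_disjoint_ker_funLeft [Nonempty α] {V : Submodule K (α → K)}
    [FiniteDimensional K V] {n : ℕ} (hn : Module.finrank K V ≤ n) :
    ∃ X : Fin n → α, Disjoint V (LinearMap.ker (LinearMap.funLeft K K X)) := by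
  induction n generalizing V with
  | zero =>
    rw [Submodule.finrank_eq_zero.1 (Nat.le_zero.1 hn)]
    exact ⟨Fin.elim0, disjoint_bot_left⟩
  | succ n ih =>
    rcases eq_or_ne V ⊥ with hV | hV
    · exact ⟨fun _ => Classical.arbitrary α, hV ▸ disjoint_bot_left⟩
    obtain ⟨v₀, hv₀, hv₀_ne⟩ := V.ne_bot_iff.1 hV
    obtain ⟨x₀, hx₀⟩ := Function.ne_iff.1 hv₀_ne
    let W := V ⊓ LinearMap.ker (LinearMap.proj (R := K) (φ := fun _ : α => K) x₀)
    have hWV : W < V := inf_lt_left.2 fun h => hx₀ (h hv₀)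
    have : FiniteDimensional K W := Submodule.finiteDimensional_of_le hWV.le
    obtain ⟨X, hX⟩ := ih (V := W) (by have := Submodule.finrank_lt_finrank_of_lt hWV; omega)
    refine ⟨Fin.cons x₀ X, LinearMap.disjoint_ker.2 fun v hv hvX => ?_⟩
    exact LinearMap.disjoint_ker.1 hX v ⟨hv, congrFun hvX 0⟩ (funext fun k => congrFun hvX k.succ)

end Evaluation

section LLR

variable {α ι : Type*} [Fintype ι] [DecidableEq ι]

theorem mem_tangentSet_iff {f : α → (ι → ℝ) → ℝ} {θ : ι → ℝ} {g : α → ℝ} :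
    g ∈ tangentSet f θ ↔ g - (fun x => f x θ) ∈ Submodule.span ℝ (Set.range (pgrad f θ)) := by
  rw [Submodule.mem_span_range_iff_exists_fun]
  refine exists_congr fun a => ?_
  have hsum : (fun x => f x θ) + ∑ i, a i • pgrad f θ i =
      fun x => f x θ + ∑ i, a i * pgrad f θ i x := by
    ext x
    simp [Finset.sum_apply]
  rw [eq_sub_iff_add_eq', hsum, eq_comm]

namespace IsDistanceLoss

variable {ℓ : ℝ → ℝ → ℝ} (hℓ : IsDistanceLoss ℓ) {n : ℕ} (X : Fin n → α) (fstar : α → ℝ)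
include hℓ

theorem empLoss_nonneg (g : α → ℝ) : 0 ≤ empLoss ℓ X fstar g :=
  mul_nonneg (by positivity) (Finset.sum_nonneg fun i _ => (hℓ.2 _ _).1)

theorem empLoss_eq_zero_iff {g : α → ℝ} :
    empLoss ℓ X fstar g = 0 ↔ ∀ i, g (X i) = fstar (X i) := by
  rcases Nat.eq_zero_or_pos n with rfl | hn
  · simp [empLoss]
  rw [empLoss, mul_eq_zero, or_iff_right (by positivity),
    Finset.sum_eq_zero_iff_of_nonneg fun i _ => (hℓ.2 _ _).1]
  simp only [Finset.mem_univ, true_implies, (hℓ.2 _ _).2]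

theorem llrAt_iff {f : α → (ι → ℝ) → ℝ} {θ : ι → ℝ} :
    LLRAt ℓ f θ X fstar ↔ fstar ∈ tangentSet f θ ∧
      ∀ g ∈ tangentSet f θ, (∀ i, g (X i) = fstar (X i)) → g = fstar := by
  have isMin_iff : fstar ∈ tangentSet f θ → ∀ g,
      (∀ h ∈ tangentSet f θ, empLoss ℓ X fstar g ≤ empLoss ℓ X fstar h) ↔
        ∀ i, g (X i) = fstar (X i) := by
    intro hf g
    rw [← hℓ.empLoss_eq_zero_iff]
    refine ⟨fun H => le_antisymm ?_ (hℓ.empLoss_nonneg X fstar g), fun H h _ => ?_⟩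
    · exact (H fstar hf).trans_eq ((hℓ.empLoss_eq_zero_iff X fstar).2 fun _ => rfl)
    · exact H ▸ hℓ.empLoss_nonneg X fstar h
  constructor
  · rintro ⟨hf, -, huniq⟩
    exact ⟨hf, fun g hg hgX => huniq g hg ((isMin_iff hf g).2 hgX)⟩
  · rintro ⟨hf, huniq⟩
    exact ⟨hf, (isMin_iff hf fstar).2 fun _ => rfl,
      fun g hg hmin => huniq g hg ((isMin_iff hf g).1 hmin)⟩

theorem llrAt_iff_disjoint_ker_funLeft {f : α → (ι → ℝ) → ℝ} {θ : ι → ℝ}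
    (htarget : (fun x => f x θ) = fstar) :
    LLRAt ℓ f θ X fstar ↔ Disjoint (Submodule.span ℝ (Set.range (pgrad f θ)))
      (LinearMap.ker (LinearMap.funLeft ℝ ℝ X)) := by
  subst htarget
  rw [hℓ.llrAt_iff, LinearMap.disjoint_ker]
  simp only [mem_tangentSet_iff, sub_self, Submodule.zero_mem, true_and]
  constructor
  · intro H v hv hvX
    have := H (v + fun x => f x θ) (by simpa using hv) fun i => by
      simpa using congrFun hvX i
    simpa using this
  · intro H g hg hgX
    exact sub_eq_zero.1 (H _ hg (funext fun i => by simp [hgX i]))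

end IsDistanceLoss

end LLR

theorem llr_phase_transition_general {d M : ℕ} (ℓ : ℝ → ℝ → ℝ) (hℓ : IsDistanceLoss ℓ)
    (f : (Fin d → ℝ) → (Fin M → ℝ) → ℝ)
    (θ' : Fin M → ℝ) (fstar : (Fin d → ℝ) → ℝ)
    (htarget : (fun x => f x θ') = fstar) (n : ℕ) :
    (n < modelRankAt f θ' → ∀ X : Fin n → Fin d → ℝ, ¬ LLRAt ℓ f θ' X fstar) ∧
    (modelRankAt f θ' ≤ n → ∃ X : Fin n → Fin d → ℝ, LLRAt ℓ f θ' X fstar) := by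
  have : FiniteDimensional ℝ (Submodule.span ℝ (Set.range (pgrad f θ'))) :=
    FiniteDimensional.span_of_finite ℝ (Set.finite_range _)
  refine ⟨fun hn X hX => ?_, fun hn => ?_⟩
  · exact hn.not_ge (Submodule.finrank_le_of_disjoint_ker_funLeft
      ((hℓ.llrAt_iff_disjoint_ker_funLeft X fstar htarget).1 hX))
  · obtain ⟨X, hX⟩ := Submodule.exists_disjoint_ker_funLeft hn
    exact ⟨X, (hℓ.llrAt_iff_disjoint_ker_funLeft X fstar htarget).2 hX⟩

/-- phase transition of the LLR-guarantee at a target point. -/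
theorem llr_phase_transition {d M : ℕ} (ℓ : ℝ → ℝ → ℝ) (hℓ : IsDistanceLoss ℓ)
    (f : (Fin d → ℝ) → (Fin M → ℝ) → ℝ) (hdiff : ∀ x, Differentiable ℝ (f x))
    (θ' : Fin M → ℝ) (fstar : (Fin d → ℝ) → ℝ)
    (htarget : (fun x => f x θ') = fstar) (n : ℕ) :
    (n < modelRankAt f θ' → ∀ X : Fin n → Fin d → ℝ, ¬ LLRAt ℓ f θ' X fstar) ∧
    (modelRankAt f θ' ≤ n → ∃ X : Fin n → Fin d → ℝ, LLRAt ℓ f θ' X fstar) :=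
  llr_phase_transition_general ℓ hℓ f θ' fstar htarget n
end

section
/- For a differentiable model f_θ with M parameters, the optimistic sample size of any target function f* in the model's function space equals the model rank of f*, i.e., O_{f_θ}(f*) = min over θ' with f(·;θ')=f* of rank_{f_θ}(θ'). -/
open scoped BigOperators

lemma exists_sep_points {α : Type*} :
    ∀ (r : ℕ) (V : Submodule ℝ (α → ℝ)) [FiniteDimensional ℝ V],
      Module.finrank ℝ V = r →
      ∃ X : Fin r → α, ∀ v ∈ V, (∀ j, v (X j) = 0) → v = 0 := by
  intro r
  induction r with
  | zero =>
    intro V _ hr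
    refine ⟨Fin.elim0, fun v hv _ => ?_⟩
    have : V = ⊥ := Submodule.finrank_eq_zero.mp hr
    simpa [this] using hv
  | succ r ih =>
    intro V _ hr
    have hnt : Nontrivial V := Module.finrank_pos_iff (R := ℝ) |>.mp (by omega)
    obtain ⟨v₀, hv₀⟩ := exists_ne (0 : V)
    have hval : (v₀ : α → ℝ) ≠ 0 := fun h => hv₀ (Subtype.ext h)
    obtain ⟨x, hx⟩ : ∃ x, (v₀ : α → ℝ) x ≠ 0 := by
      by_contra h
      push_neg at h
      exact hval (funext h)
    set ψ : V →ₗ[ℝ] ℝ := (LinearMap.proj x).comp V.subtype with hψ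
    have hsurj : Function.Surjective ψ := by
      intro c
      refine ⟨(c / (v₀ : α → ℝ) x) • v₀, ?_⟩
      simp [hψ, div_mul_cancel₀, hx]
    have hker : Module.finrank ℝ (LinearMap.ker ψ) = r := by
      have h1 := LinearMap.finrank_range_add_finrank_ker ψ
      have h2 : LinearMap.range ψ = ⊤ := LinearMap.range_eq_top.mpr hsurj
      rw [h2] at h1
      simp [finrank_top] at h1
      omega
    set W := (LinearMap.ker ψ).map V.subtype with hW
    have hWfin : FiniteDimensional ℝ W := inferInstance
    have hWr : Module.finrank ℝ W = r := by
      rw [hW, Submodule.finrank_map_subtype_eq]; exact hker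
    obtain ⟨X', hX'⟩ := ih W hWr
    refine ⟨Fin.cons x X', fun v hv hvz => ?_⟩
    have hvx : v x = 0 := by simpa using hvz 0
    have hvW : v ∈ W := ⟨⟨v, hv⟩, by simp [hψ, LinearMap.mem_ker, hvx], rfl⟩
    exact hX' v hvW (fun j => by simpa using hvz j.succ)

section Aux
variable {α : Type*} {ι : Type*} [Fintype ι] [DecidableEq ι]

lemma empLoss_nonneg {ℓ : ℝ → ℝ → ℝ} (hℓ : IsDistanceLoss ℓ) {n : ℕ}
    (X : Fin n → α) (fstar g : α → ℝ) : 0 ≤ empLoss ℓ X fstar g := by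
  apply mul_nonneg (by positivity)
  exact Finset.sum_nonneg fun i _ => (hℓ.2 _ _).1

lemma empLoss_self {ℓ : ℝ → ℝ → ℝ} (hℓ : IsDistanceLoss ℓ) {n : ℕ}
    (X : Fin n → α) (fstar : α → ℝ) : empLoss ℓ X fstar fstar = 0 := by
  unfold empLoss
  rw [Finset.sum_eq_zero fun i _ => ((hℓ.2 _ _).2).mpr rfl, mul_zero]

lemma empLoss_eq_zero_iff {ℓ : ℝ → ℝ → ℝ} (hℓ : IsDistanceLoss ℓ) {n : ℕ}
    (X : Fin n → α) (fstar g : α → ℝ) (hz : empLoss ℓ X fstar g = 0) (j : Fin n) :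
    g (X j) = fstar (X j) := by
  have hn : (1 / n : ℝ) ≠ 0 := by
    have : 0 < n := j.pos
    positivity
  have hsum : ∑ i, ℓ (g (X i)) (fstar (X i)) = 0 := by
    rcases mul_eq_zero.mp hz with h | h
    · exact absurd h hn
    · exact h
  have := (Finset.sum_eq_zero_iff_of_nonneg (fun i _ => (hℓ.2 _ _).1)).mp hsum j
    (Finset.mem_univ j)
  exact ((hℓ.2 _ _).2).mp this

lemma sum_mul_mem_span (f : α → (ι → ℝ) → ℝ) (θ : ι → ℝ) (a : ι → ℝ) :
    (fun x => ∑ i, a i * pgrad f θ i x) ∈ Submodule.span ℝ (Set.range (pgrad f θ)) := by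
  rw [Submodule.mem_span_range_iff_exists_fun]
  refine ⟨a, ?_⟩
  funext x
  simp [Finset.sum_apply]

lemma hasLLR_of_sep {ℓ : ℝ → ℝ → ℝ} (hℓ : IsDistanceLoss ℓ)
    (f : α → (ι → ℝ) → ℝ) (θ : ι → ℝ) (fstar : α → ℝ)
    (hθ : (fun x => f x θ) = fstar) {n : ℕ} (X : Fin n → α)
    (hsep : ∀ v ∈ Submodule.span ℝ (Set.range (pgrad f θ)), (∀ j, v (X j) = 0) → v = 0) :
    LLRAt ℓ f θ X fstar := by
  have hmem : fstar ∈ tangentSet f θ := ⟨0, by funext x; simp [← hθ]⟩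
  refine ⟨hmem, fun h _ => ?_, fun g hg hmin => ?_⟩
  · rw [empLoss_self hℓ]; exact empLoss_nonneg hℓ X fstar h
  · obtain ⟨a, rfl⟩ := hg
    have hz : empLoss ℓ X fstar (fun x => f x θ + ∑ i, a i * pgrad f θ i x) = 0 := by
      have h1 := hmin fstar hmem
      rw [empLoss_self hℓ] at h1
      exact le_antisymm h1 (empLoss_nonneg hℓ X fstar _)
    have hv : (fun x => ∑ i, a i * pgrad f θ i x) = 0 := by
      refine hsep _ (sum_mul_mem_span f θ a) fun j => ?_
      have := empLoss_eq_zero_iff hℓ X fstar _ hz j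
      have hfθ : f (X j) θ = fstar (X j) := congrFun hθ (X j)
      beta_reduce at this
      linarith [this]
    funext x
    have := congrFun hv x
    simp only [Pi.zero_apply] at this
    simp [this, ← hθ]

lemma rank_le_of_LLR {ℓ : ℝ → ℝ → ℝ} (hℓ : IsDistanceLoss ℓ)
    (f : α → (ι → ℝ) → ℝ) (θ : ι → ℝ) (fstar : α → ℝ)
    (hθ : (fun x => f x θ) = fstar) {n : ℕ} (X : Fin n → α)
    (hLLR : LLRAt ℓ f θ X fstar) : modelRankAt f θ ≤ n := by
  set V := Submodule.span ℝ (Set.range (pgrad f θ)) with hV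
  haveI : FiniteDimensional ℝ V := FiniteDimensional.span_of_finite ℝ (Set.finite_range _)
  set E : V →ₗ[ℝ] (Fin n → ℝ) :=
    LinearMap.pi (fun j => (LinearMap.proj (X j)).comp V.subtype) with hE
  have hinj : Function.Injective E := by
    rw [← LinearMap.ker_eq_bot]
    rw [Submodule.eq_bot_iff]
    rintro ⟨v, hv⟩ hk
    obtain ⟨a, ha⟩ := Submodule.mem_span_range_iff_exists_fun ℝ |>.mp hv
    have hvz : ∀ j, v (X j) = 0 := by
      intro j
      have := congrFun (LinearMap.mem_ker.mp hk) j
      simpa [hE] using this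
    have hva : (fun x => ∑ i, a i * pgrad f θ i x) = v := by
      funext x
      rw [← ha]
      simp [Finset.sum_apply]
    set g : α → ℝ := fun x => f x θ + ∑ i, a i * pgrad f θ i x with hg
    have hgt : g ∈ tangentSet f θ := ⟨a, rfl⟩
    have hgX : ∀ j, g (X j) = fstar (X j) := by
      intro j
      have hfθ : f (X j) θ = fstar (X j) := congrFun hθ (X j)
      have := congrFun hva (X j)
      simp only [hg]
      rw [this, hvz j, add_zero, hfθ]
    have hgz : empLoss ℓ X fstar g = 0 := by
      unfold empLoss
      rw [Finset.sum_eq_zero fun i _ => ((hℓ.2 _ _).2).mpr (hgX i), mul_zero]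
    have hgmin : ∀ h ∈ tangentSet f θ, empLoss ℓ X fstar g ≤ empLoss ℓ X fstar h := by
      intro h hh
      rw [hgz]; exact empLoss_nonneg hℓ X fstar h
    have hgf : g = fstar := hLLR.2.2 g hgt hgmin
    have : v = 0 := by
      funext x
      have h1 := congrFun hgf x
      have h2 := congrFun hva x
      have hfθ : f x θ = fstar x := congrFun hθ x
      simp only [hg] at h1
      rw [h2] at h1
      simpa [hfθ] using h1
    exact Subtype.ext this
  calc modelRankAt f θ = Module.finrank ℝ V := rfl
    _ ≤ Module.finrank ℝ (Fin n → ℝ) := LinearMap.finrank_le_finrank_of_injective hinj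
    _ = n := by simp

end Aux

/-- the optimistic sample size of a target function equals its model rank. -/
theorem opt_sample_size_eq_model_rank {d M : ℕ} (ℓ : ℝ → ℝ → ℝ) (hℓ : IsDistanceLoss ℓ)
    (f : (Fin d → ℝ) → (Fin M → ℝ) → ℝ) (hdiff : ∀ x, Differentiable ℝ (f x))
    (fstar : (Fin d → ℝ) → ℝ) (hexp : ∃ θ : Fin M → ℝ, (fun x => f x θ) = fstar) :
    optSampleSize ℓ f fstar = modelRank f fstar := by
  classical
  obtain ⟨θ₀, hθ₀⟩ := hexp
  have hne : {r | ∃ θ : Fin M → ℝ, (fun x => f x θ) = fstar ∧ modelRankAt f θ = r}.Nonempty :=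
    ⟨modelRankAt f θ₀, θ₀, hθ₀, rfl⟩
  obtain ⟨θ₁, hθ₁, hr₁⟩ := Nat.sInf_mem hne
  have hr₁' : modelRankAt f θ₁ = modelRank f fstar := hr₁
  haveI : FiniteDimensional ℝ (Submodule.span ℝ (Set.range (pgrad f θ₁))) :=
    FiniteDimensional.span_of_finite ℝ (Set.finite_range _)
  obtain ⟨X, hX⟩ := exists_sep_points (modelRank f fstar)
    (Submodule.span ℝ (Set.range (pgrad f θ₁))) hr₁'
  have h1 : HasLLR ℓ f fstar (modelRank f fstar) :=
    ⟨X, θ₁, hθ₁, hasLLR_of_sep hℓ f θ₁ fstar hθ₁ X hX⟩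
  have hle : optSampleSize ℓ f fstar ≤ modelRank f fstar := Nat.sInf_le h1
  have hne2 : {n | HasLLR ℓ f fstar n}.Nonempty := ⟨modelRank f fstar, h1⟩
  obtain ⟨X₂, θ₂, hθ₂, hLLR⟩ := Nat.sInf_mem hne2
  have h2 : modelRank f fstar ≤ modelRankAt f θ₂ := Nat.sInf_le ⟨θ₂, hθ₂, rfl⟩
  have h3 : modelRankAt f θ₂ ≤ optSampleSize ℓ f fstar :=
    rank_le_of_LLR hℓ f θ₂ fstar hθ₂ X₂ hLLR
  omega
end

section
/- Let f_θ be a model that is real-analytic in both inputs and parameters. If a target function f* in the model's function space has an n-sample LLR-guarantee, then f* has the LLR-guarantee for Lebesgue-almost every choice of n input points, i.e., an n-sample LLR-guarantee almost everywhere. -/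
open scoped BigOperators

open MeasureTheory


section AuxLemmas


lemma aux_countable_zeros_1d {g : ℝ → ℝ} (hg : ∀ z : ℝ, AnalyticAt ℝ g z) {y : ℝ} (hy : g y ≠ 0) :
    Set.Countable {t : ℝ | g t = 0} := by
  have hg' : AnalyticOnNhd ℝ g Set.univ := fun z _ => hg z
  have key : ∀ z : ℝ, ∀ᶠ w in nhdsWithin z {z}ᶜ, g w ≠ 0 := by
    intro z
    rcases (hg z).eventually_eq_zero_or_eventually_ne_zero with h | h
    · exact absurd
        (hg'.eqOn_zero_of_preconnected_of_frequently_eq_zero isPreconnected_univ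
          (Set.mem_univ z) ((h.filter_mono nhdsWithin_le_nhds).frequently) (Set.mem_univ y)) hy
    · exact h
  set Z := {t : ℝ | g t = 0} with hZ
  haveI : DiscreteTopology Z := by
    rw [discreteTopology_subtype_iff]
    intro z hz
    rw [← Filter.empty_mem_iff_bot]
    have h1 : Z ∈ nhdsWithin z {z}ᶜ ⊓ Filter.principal Z :=
      Filter.mem_inf_of_right (Filter.mem_principal_self Z)
    have h2 : {w | g w ≠ 0} ∈ nhdsWithin z {z}ᶜ ⊓ Filter.principal Z :=
      Filter.mem_inf_of_left (key z)
    have hempty : Z ∩ {w | g w ≠ 0} = (∅ : Set ℝ) := by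
      ext w
      constructor
      · rintro ⟨hw1, hw2⟩; exact absurd hw1 hw2
      · exact fun hw => hw.elim
    exact hempty ▸ Filter.inter_mem h1 h2
  have : Countable Z := TopologicalSpace.separableSpace_iff_countable.mp inferInstance
  exact Set.countable_coe_iff.mp this



variable {E : Type*} [NormedAddCommGroup E] [NormedSpace ℝ E]

lemma analyticAt_cons_pair {m : ℕ} (p : E × (Fin m → E)) :
    AnalyticAt ℝ (fun p : E × (Fin m → E) => (Fin.cons p.1 p.2 : Fin (m+1) → E)) p := by
  apply AnalyticAt.pi
  intro j
  induction j using Fin.cases with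
  | zero =>
    have : (fun p : E × (Fin m → E) => (Fin.cons p.1 p.2 : Fin (m+1) → E) 0) =
        fun p : E × (Fin m → E) => p.1 := by funext q; simp
    rw [this]; exact analyticAt_fst
  | succ i =>
    have : (fun p : E × (Fin m → E) => (Fin.cons p.1 p.2 : Fin (m+1) → E) i.succ) =
        fun p : E × (Fin m → E) => p.2 i := by funext q; simp
    rw [this]
    exact ((ContinuousLinearMap.proj i : (Fin m → E) →L[ℝ] E).analyticAt _).comp analyticAt_snd

lemma analyticAt_cons_left {m : ℕ} (g : (Fin (m+1) → E) → ℝ) (hg : ∀ z, AnalyticAt ℝ g z)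
    (y : Fin m → E) (t : E) : AnalyticAt ℝ (fun s : E => g (Fin.cons s y)) t :=
  (hg _).comp ((analyticAt_cons_pair _).comp (analyticAt_id.prod analyticAt_const))

lemma analyticAt_cons_right {m : ℕ} (g : (Fin (m+1) → E) → ℝ) (hg : ∀ z, AnalyticAt ℝ g z)
    (t : E) (y : Fin m → E) : AnalyticAt ℝ (fun y' : Fin m → E => g (Fin.cons t y')) y :=
  (hg _).comp ((analyticAt_cons_pair _).comp (analyticAt_const.prod analyticAt_id))

lemma analytic_zero_set_null_pi [MeasureSpace E] [BorelSpace E]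
    [SecondCountableTopology E] [SigmaFinite (volume : Measure E)]
    (hE : ∀ g : E → ℝ, (∀ z, AnalyticAt ℝ g z) → ∀ y, g y ≠ 0 → volume {x : E | g x = 0} = 0) :
    ∀ (m : ℕ) (g : (Fin m → E) → ℝ), (∀ z, AnalyticAt ℝ g z) → ∀ y, g y ≠ 0 →
      volume {x : Fin m → E | g x = 0} = 0 := by
  intro m
  induction m with
  | zero =>
    intro g hg y hy
    have hempty : {x : Fin 0 → E | g x = 0} = ∅ := by
      ext x
      simp only [Set.mem_setOf_eq, Set.mem_empty_iff_false, iff_false]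
      rw [Subsingleton.elim x y]
      exact hy
    rw [hempty]; exact measure_empty
  | succ m ih =>
    intro g hg y hy
    have hgc : Continuous g := continuous_iff_continuousAt.mpr fun x => (hg x).continuousAt
    have hZm : MeasurableSet {x : Fin (m+1) → E | g x = 0} :=
      (isClosed_eq hgc continuous_const).measurableSet
    set e := MeasurableEquiv.piFinSuccAbove (fun _ : Fin (m+1) => E) 0 with he
    have mp : MeasurePreserving e (volume : Measure (Fin (m+1) → E))
        ((volume : Measure E).prod (volume : Measure (Fin m → E))) := by
      have := measurePreserving_piFinSuccAbove (fun _ : Fin (m+1) => (volume : Measure E)) 0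
      simpa [MeasureTheory.volume_pi, he] using this
    have hsymm : ∀ p : E × (Fin m → E), e.symm p = Fin.cons p.1 p.2 := by
      intro p
      show (Fin.insertNthEquiv (fun _ : Fin (m+1) => E) 0) p = _
      simp [Fin.insertNthEquiv, Fin.insertNth_zero']
    have hpre : ((volume : Measure E).prod (volume : Measure (Fin m → E)))
        (⇑e.symm ⁻¹' {x | g x = 0}) = volume {x : Fin (m+1) → E | g x = 0} :=
      (MeasurePreserving.symm e mp).measure_preimage hZm.nullMeasurableSet
    rw [← hpre]
    have hSm : MeasurableSet (⇑e.symm ⁻¹' {x : Fin (m+1) → E | g x = 0}) :=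
      e.symm.measurable hZm
    rw [MeasureTheory.Measure.measure_prod_null hSm]
    set T := {t : E | ∀ y', g (Fin.cons t y') = 0} with hT
    have hTnull : volume T = 0 := by
      have hysplit : g (Fin.cons (y 0) (Fin.tail y)) ≠ 0 := by
        rw [Fin.cons_self_tail]; exact hy
      have := hE (fun t => g (Fin.cons t (Fin.tail y)))
        (fun t => analyticAt_cons_left g hg (Fin.tail y) t) (y 0) hysplit
      refine measure_mono_null ?_ this
      intro t ht
      exact ht (Fin.tail y)
    have hae : ∀ᵐ t : E ∂volume, t ∉ T := (MeasureTheory.measure_eq_zero_iff_ae_notMem).mp hTnull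
    filter_upwards [hae] with t ht
    simp only [Pi.zero_apply]
    have hslice : Prod.mk t ⁻¹' (⇑e.symm ⁻¹' {x : Fin (m+1) → E | g x = 0}) =
        {y' : Fin m → E | g (Fin.cons t y') = 0} := by
      ext y'
      simp [hsymm (t, y')]
    rw [hslice]
    obtain ⟨y', hy'⟩ := not_forall.mp ht
    exact ih (fun y'' => g (Fin.cons t y'')) (fun y'' => analyticAt_cons_right g hg t y'') y' hy'

lemma analytic_zero_null_real :
    ∀ g : ℝ → ℝ, (∀ z, AnalyticAt ℝ g z) → ∀ y, g y ≠ 0 → volume {x : ℝ | g x = 0} = 0 :=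
  fun _ hg _ hy => ((aux_countable_zeros_1d hg hy).measure_zero _)

lemma analytic_zero_null_vec (d : ℕ) :
    ∀ g : (Fin d → ℝ) → ℝ, (∀ z, AnalyticAt ℝ g z) → ∀ y, g y ≠ 0 →
      volume {x : Fin d → ℝ | g x = 0} = 0 :=
  analytic_zero_set_null_pi analytic_zero_null_real d

lemma analytic_zero_null_mat (n d : ℕ) :
    ∀ g : (Fin n → Fin d → ℝ) → ℝ, (∀ z, AnalyticAt ℝ g z) → ∀ y, g y ≠ 0 →
      volume {x : Fin n → Fin d → ℝ | g x = 0} = 0 :=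
  analytic_zero_set_null_pi (analytic_zero_null_vec d) n


lemma pgrad_analyticAt {d M : ℕ} (f : (Fin d → ℝ) → (Fin M → ℝ) → ℝ)
    (hana : ∀ p : (Fin d → ℝ) × (Fin M → ℝ), AnalyticAt ℝ (fun q => f q.1 q.2) p)
    (θ : Fin M → ℝ) (i : Fin M) (x : Fin d → ℝ) : AnalyticAt ℝ (pgrad f θ i) x := by
  set F : (Fin d → ℝ) × (Fin M → ℝ) → ℝ := fun q => f q.1 q.2 with hF
  have hFa : AnalyticOnNhd ℝ F Set.univ := fun p _ => hana p
  have hF' : ∀ p, AnalyticAt ℝ (fderiv ℝ F) p := fun p => hFa.fderiv p (Set.mem_univ p)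
  have key : ∀ x' : Fin d → ℝ,
      pgrad f θ i x' = fderiv ℝ F (x', θ) ((0 : Fin d → ℝ), Pi.single i 1) := by
    intro x'
    have h1 : HasFDerivAt F (fderiv ℝ F (x', θ)) (x', θ) :=
      (hana (x', θ)).differentiableAt.hasFDerivAt
    have h2 : HasFDerivAt (fun u : Fin M → ℝ => ((x', u) : (Fin d → ℝ) × (Fin M → ℝ)))
        (((0 : (Fin M → ℝ) →L[ℝ] (Fin d → ℝ))).prod (ContinuousLinearMap.id ℝ (Fin M → ℝ))) θ :=
      HasFDerivAt.prodMk (hasFDerivAt_const x' θ) (hasFDerivAt_id θ)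
    have h3 : HasFDerivAt (f x')
        ((fderiv ℝ F (x', θ)).comp
          (((0 : (Fin M → ℝ) →L[ℝ] (Fin d → ℝ))).prod (ContinuousLinearMap.id ℝ (Fin M → ℝ)))) θ :=
      h1.comp θ h2
    show fderiv ℝ (f x') θ (Pi.single i 1) = _
    rw [h3.fderiv]
    simp
  have heq : pgrad f θ i =
      fun x' => fderiv ℝ F (x', θ) ((0 : Fin d → ℝ), Pi.single i 1) := funext key
  rw [heq]
  have ha : AnalyticAt ℝ (fun x' : Fin d → ℝ => ((x', θ) : (Fin d → ℝ) × (Fin M → ℝ))) x :=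
    analyticAt_id.prod analyticAt_const
  have hb : AnalyticAt ℝ (fun x' : Fin d → ℝ => fderiv ℝ F (x', θ)) x := by
    have := AnalyticAt.comp (g := fderiv ℝ F) (x := x) (hF' (x, θ)) ha
    simpa [Function.comp_def] using this
  have hclm : AnalyticAt ℝ
      (⇑(ContinuousLinearMap.apply ℝ ℝ
        (((0 : Fin d → ℝ), Pi.single i 1) : (Fin d → ℝ) × (Fin M → ℝ))))
      (fderiv ℝ F (x, θ)) := ContinuousLinearMap.analyticAt _ _
  have hc := AnalyticAt.comp (f := fun x' : Fin d → ℝ => fderiv ℝ F (x', θ)) (x := x) hclm hb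
  simpa [Function.comp_def] using hc

lemma gram_det_ne_zero_iff {n r : ℕ} (v : Fin r → (Fin n → ℝ)) :
    (Matrix.of fun k k' : Fin r => ∑ j, v k j * v k' j).det ≠ 0 ↔ LinearIndependent ℝ v := by
  set G : Matrix (Fin r) (Fin r) ℝ := Matrix.of fun k k' => ∑ j, v k j * v k' j with hG
  have hmv : ∀ (c : Fin r → ℝ) (k : Fin r),
      G.mulVec c k = ∑ j, v k j * (∑ k', c k' * v k' j) := by
    intro c k
    simp only [Matrix.mulVec, dotProduct, hG, Matrix.of_apply]
    calc ∑ k', (∑ j, v k j * v k' j) * c k'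
        = ∑ k', ∑ j, v k j * (c k' * v k' j) :=
          Finset.sum_congr rfl fun k' _ => by
            rw [Finset.sum_mul]; exact Finset.sum_congr rfl fun j _ => by ring
      _ = ∑ j, ∑ k', v k j * (c k' * v k' j) := Finset.sum_comm
      _ = ∑ j, v k j * ∑ k', c k' * v k' j :=
          Finset.sum_congr rfl fun j _ => by rw [Finset.mul_sum]
  constructor
  · intro hdet
    rw [Fintype.linearIndependent_iff]
    intro c hc
    have hu : ∀ j, (∑ k', c k' * v k' j) = 0 := by
      intro j
      have := congrFun hc j
      simpa [Finset.sum_apply, Pi.smul_apply, smul_eq_mul] using this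
    have hmv0 : G.mulVec c = 0 := by
      funext k
      rw [hmv]
      simp [hu]
    have hczero : c = 0 := by
      by_contra hcne
      exact hdet ((Matrix.exists_mulVec_eq_zero_iff).mp ⟨c, hcne, hmv0⟩)
    exact fun i => congrFun hczero i
  · intro hLI hdet
    obtain ⟨c, hcne, hmv0⟩ := (Matrix.exists_mulVec_eq_zero_iff).mpr hdet
    set u : Fin n → ℝ := fun j => ∑ k', c k' * v k' j with hu
    have h1 : ∑ k, c k * G.mulVec c k = 0 := by
      rw [hmv0]; simp
    have h2 : ∑ k, c k * G.mulVec c k = ∑ j, u j * u j := by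
      calc ∑ k, c k * G.mulVec c k
          = ∑ k, c k * ∑ j, v k j * u j := Finset.sum_congr rfl fun k _ => by rw [hmv]
        _ = ∑ k, ∑ j, c k * (v k j * u j) :=
            Finset.sum_congr rfl fun k _ => Finset.mul_sum _ _ _
        _ = ∑ j, ∑ k, c k * (v k j * u j) := Finset.sum_comm
        _ = ∑ j, u j * u j := by
            refine Finset.sum_congr rfl fun j _ => ?_
            have : ∑ k, c k * (v k j * u j) = (∑ k, c k * v k j) * u j := by
              rw [Finset.sum_mul]
              exact Finset.sum_congr rfl fun k _ => by ring
            rw [this]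
    have heach : ∀ j, u j = 0 := by
      intro j
      have hnn : ∀ j ∈ Finset.univ, (0:ℝ) ≤ u j * u j := fun j _ => mul_self_nonneg _
      have hz : ∑ j, u j * u j = 0 := by rw [← h2]; exact h1
      exact mul_self_eq_zero.mp
        ((Finset.sum_eq_zero_iff_of_nonneg hnn).mp hz j (Finset.mem_univ j))
    have hsum : ∑ k, c k • v k = 0 := by
      funext j
      simp only [Finset.sum_apply, Pi.smul_apply, smul_eq_mul, Pi.zero_apply]
      exact heach j
    apply hcne
    funext i
    exact (Fintype.linearIndependent_iff.mp hLI) c hsum i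

section EmpLossAux

variable {α : Type*}

lemma aux_empLoss_nonneg (ℓ : ℝ → ℝ → ℝ) (hℓ : IsDistanceLoss ℓ) {n : ℕ} (X : Fin n → α)
    (fstar g : α → ℝ) : 0 ≤ empLoss ℓ X fstar g := by
  unfold empLoss
  apply mul_nonneg (by positivity)
  exact Finset.sum_nonneg fun i _ => (hℓ.2 _ _).1

lemma aux_empLoss_self (ℓ : ℝ → ℝ → ℝ) (hℓ : IsDistanceLoss ℓ) {n : ℕ} (X : Fin n → α)
    (fstar : α → ℝ) : empLoss ℓ X fstar fstar = 0 := by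
  unfold empLoss
  have : ∀ j : Fin n, ℓ (fstar (X j)) (fstar (X j)) = 0 := fun j => (hℓ.2 _ _).2.mpr rfl
  simp [this]

lemma aux_empLoss_eq_zero (ℓ : ℝ → ℝ → ℝ) (hℓ : IsDistanceLoss ℓ) {n : ℕ} (X : Fin n → α)
    (fstar g : α → ℝ) (hz : empLoss ℓ X fstar g = 0) (j : Fin n) : g (X j) = fstar (X j) := by
  have hn : (0:ℝ) < n := by exact_mod_cast j.pos
  unfold empLoss at hz
  have h1n : (1/(n:ℝ)) ≠ 0 := by positivity
  rcases mul_eq_zero.mp hz with h | h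
  · exact absurd h h1n
  · have hnn : ∀ i ∈ Finset.univ, (0:ℝ) ≤ ℓ (g (X i)) (fstar (X i)) :=
      fun i _ => (hℓ.2 _ _).1
    have := (Finset.sum_eq_zero_iff_of_nonneg hnn).mp h j (Finset.mem_univ j)
    exact (hℓ.2 _ _).2.mp this

end EmpLossAux

end AuxLemmas


/-- for a real-analytic model, an `n`-sample LLR-guarantee upgrades to an
`n`-sample LLR-guarantee for Lebesgue-almost every choice of `n` input points. -/
theorem llr_guarantee_ae {d M : ℕ} (ℓ : ℝ → ℝ → ℝ) (hℓ : IsDistanceLoss ℓ)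
    (f : (Fin d → ℝ) → (Fin M → ℝ) → ℝ)
    (hana : ∀ p : (Fin d → ℝ) × (Fin M → ℝ), AnalyticAt ℝ (fun q => f q.1 q.2) p)
    (fstar : (Fin d → ℝ) → ℝ) (hexp : ∃ θ : Fin M → ℝ, (fun x => f x θ) = fstar)
    (n : ℕ) (h : HasLLR ℓ f fstar n) :
    ∀ᵐ X : Fin n → (Fin d → ℝ) ∂volume,
      ∃ θ : Fin M → ℝ, (fun x => f x θ) = fstar ∧ LLRAt ℓ f θ X fstar := by
  classical
  obtain ⟨X₀, θ, hθ, hLLR⟩ := h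
  have hφa : ∀ (i : Fin M) (x : Fin d → ℝ), AnalyticAt ℝ (pgrad f θ i) x :=
    fun i x => pgrad_analyticAt f hana θ i x
  have hfx : ∀ x, f x θ = fstar x := fun x => congrFun hθ x
  -- Step A : the kernel condition implies the LLR property
  have stepA : ∀ X : Fin n → Fin d → ℝ,
      (∀ a : Fin M → ℝ, (∀ j, ∑ i, a i * pgrad f θ i (X j) = 0) →
        ∀ x, ∑ i, a i * pgrad f θ i x = 0) → LLRAt ℓ f θ X fstar := by
    intro X hP
    have hmem : fstar ∈ tangentSet f θ := by
      refine ⟨0, ?_⟩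
      funext x
      simp [hfx x]
    refine ⟨hmem, ?_, ?_⟩
    · intro h' _
      rw [aux_empLoss_self ℓ hℓ X fstar]
      exact aux_empLoss_nonneg ℓ hℓ X fstar h'
    · rintro g ⟨a, rfl⟩ hmin
      have hg0 : empLoss ℓ X fstar (fun x => f x θ + ∑ i, a i * pgrad f θ i x) = 0 := by
        refine le_antisymm ?_ (aux_empLoss_nonneg ℓ hℓ X fstar _)
        have := hmin fstar hmem
        rwa [aux_empLoss_self ℓ hℓ X fstar] at this
      have hzero : ∀ j, ∑ i, a i * pgrad f θ i (X j) = 0 := by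
        intro j
        have heq := aux_empLoss_eq_zero ℓ hℓ X fstar _ hg0 j
        have : f (X j) θ + ∑ i, a i * pgrad f θ i (X j) = fstar (X j) := heq
        rw [hfx (X j)] at this
        linarith
      have hall := hP a hzero
      funext x
      simp [hall x, hfx x]
  -- Step B : the kernel condition holds at the witness sample
  have stepB : ∀ a : Fin M → ℝ, (∀ j, ∑ i, a i * pgrad f θ i (X₀ j) = 0) →
      ∀ x, ∑ i, a i * pgrad f θ i x = 0 := by
    intro a ha x
    obtain ⟨hmem₀, hmin₀, huniq₀⟩ := hLLR
    have hgmem : (fun x => f x θ + ∑ i, a i * pgrad f θ i x) ∈ tangentSet f θ := ⟨a, rfl⟩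
    have hgloss : empLoss ℓ X₀ fstar (fun x => f x θ + ∑ i, a i * pgrad f θ i x) = 0 := by
      have : ∀ j : Fin n, f (X₀ j) θ + ∑ i, a i * pgrad f θ i (X₀ j) = fstar (X₀ j) := by
        intro j
        rw [ha j, hfx (X₀ j)]
        ring
      unfold empLoss
      have hterm : ∀ j : Fin n,
          ℓ ((fun x => f x θ + ∑ i, a i * pgrad f θ i x) (X₀ j)) (fstar (X₀ j)) = 0 := by
        intro j
        show ℓ (f (X₀ j) θ + ∑ i, a i * pgrad f θ i (X₀ j)) (fstar (X₀ j)) = 0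
        rw [this j]
        exact (hℓ.2 _ _).2.mpr rfl
      simp [hterm]
    have hgeq := huniq₀ _ hgmem (fun h' _ => by
      rw [hgloss]; exact aux_empLoss_nonneg ℓ hℓ X₀ fstar h')
    have := congrFun hgeq x
    have hx : f x θ + ∑ i, a i * pgrad f θ i x = fstar x := this
    rw [hfx x] at hx
    linarith
  -- Linear algebra setup
  let Φ : (Fin n → Fin d → ℝ) → ((Fin M → ℝ) →ₗ[ℝ] (Fin n → ℝ)) := fun X =>
    LinearMap.pi fun j => ∑ i, pgrad f θ i (X j) • (LinearMap.proj i : ((Fin M → ℝ) →ₗ[ℝ] ℝ))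
  have hΦ : ∀ (X : Fin n → Fin d → ℝ) (a : Fin M → ℝ) (j : Fin n),
      Φ X a j = ∑ i, a i * pgrad f θ i (X j) := by
    intro X a j
    simp [Φ, LinearMap.pi_apply, LinearMap.sum_apply, LinearMap.smul_apply,
      LinearMap.proj_apply, smul_eq_mul, mul_comm]
  let Ψ : (Fin M → ℝ) →ₗ[ℝ] ((Fin d → ℝ) → ℝ) :=
    LinearMap.pi fun x => ∑ i, pgrad f θ i x • (LinearMap.proj i : ((Fin M → ℝ) →ₗ[ℝ] ℝ))
  have hΨ : ∀ (a : Fin M → ℝ) (x : Fin d → ℝ), Ψ a x = ∑ i, a i * pgrad f θ i x := by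
    intro a x
    simp [Ψ, LinearMap.pi_apply, LinearMap.sum_apply, LinearMap.smul_apply,
      LinearMap.proj_apply, smul_eq_mul, mul_comm]
  set W := LinearMap.ker Ψ with hWdef
  have hmemW : ∀ a : Fin M → ℝ, a ∈ W ↔ ∀ x, ∑ i, a i * pgrad f θ i x = 0 := by
    intro a
    rw [hWdef, LinearMap.mem_ker, funext_iff]
    constructor
    · intro h' x; rw [← hΨ a x]; exact h' x
    · intro h' x; rw [Pi.zero_apply, hΨ a x]; exact h' x
  have hkermem : ∀ (X : Fin n → Fin d → ℝ) (a : Fin M → ℝ),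
      a ∈ LinearMap.ker (Φ X) ↔ ∀ j, ∑ i, a i * pgrad f θ i (X j) = 0 := by
    intro X a
    rw [LinearMap.mem_ker, funext_iff]
    constructor
    · intro h' j; rw [← hΦ X a j]; exact h' j
    · intro h' j; rw [Pi.zero_apply, hΦ X a j]; exact h' j
  have hWle : ∀ X : Fin n → Fin d → ℝ, W ≤ LinearMap.ker (Φ X) := fun X a ha =>
    (hkermem X a).mpr fun j => (hmemW a).mp ha (X j)
  have hker₀ : LinearMap.ker (Φ X₀) = W :=
    le_antisymm (fun a ha => (hmemW a).mpr (stepB a ((hkermem X₀ a).mp ha))) (hWle X₀)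
  set r := Module.finrank ℝ (LinearMap.range (Φ X₀)) with hr
  have hrW : r + Module.finrank ℝ W = M := by
    have := LinearMap.finrank_range_add_finrank_ker (Φ X₀)
    rw [hker₀] at this
    rwa [Module.finrank_fin_fun] at this
  let bb := Module.finBasis ℝ (LinearMap.range (Φ X₀))
  have hbchoice : ∀ k : Fin r, ∃ a : Fin M → ℝ, Φ X₀ a = (bb k : Fin n → ℝ) :=
    fun k => LinearMap.mem_range.mp (bb k).2
  choose b hb using hbchoice
  have hLI₀ : LinearIndependent ℝ fun k => Φ X₀ (b k) := by
    have h1 := bb.linearIndependent.map' (LinearMap.range (Φ X₀)).subtype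
      (Submodule.ker_subtype _)
    have he : (fun k => Φ X₀ (b k)) = ⇑(LinearMap.range (Φ X₀)).subtype ∘ ⇑bb := by
      funext k
      simp [hb k]
    rw [he]
    exact h1
  -- the Gram determinant
  let ent : Fin r → Fin r → (Fin n → Fin d → ℝ) → ℝ := fun k k' X =>
    ∑ j, (∑ i, b k i * pgrad f θ i (X j)) * (∑ i, b k' i * pgrad f θ i (X j))
  let D : (Fin n → Fin d → ℝ) → ℝ := fun X => (Matrix.of fun k k' => ent k k' X).det
  have hDgram : ∀ X : Fin n → Fin d → ℝ,
      D X = (Matrix.of fun k k' : Fin r => ∑ j, Φ X (b k) j * Φ X (b k') j).det := by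
    intro X
    show (Matrix.of fun k k' => ent k k' X).det = _
    congr 1
    funext k k'
    simp only [Matrix.of_apply, ent]
    exact Finset.sum_congr rfl fun j _ => by rw [hΦ X (b k) j, hΦ X (b k') j]
  have hD₀ : D X₀ ≠ 0 := by
    rw [hDgram]
    exact (gram_det_ne_zero_iff _).mpr hLI₀
  -- analyticity of the Gram determinant
  have hDana : ∀ X : Fin n → Fin d → ℝ, AnalyticAt ℝ D X := by
    intro X
    have hent : ∀ k k' : Fin r, AnalyticAt ℝ (ent k k') X := by
      intro k k'
      apply Finset.analyticAt_fun_sum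
      intro j _
      have hterm : ∀ k0 : Fin r,
          AnalyticAt ℝ (fun X' : Fin n → Fin d → ℝ => ∑ i, b k0 i * pgrad f θ i (X' j)) X := by
        intro k0
        apply Finset.analyticAt_fun_sum
        intro i _
        have hproj : AnalyticAt ℝ (fun X' : Fin n → Fin d → ℝ => X' j) X :=
          (ContinuousLinearMap.proj j : (Fin n → Fin d → ℝ) →L[ℝ] (Fin d → ℝ)).analyticAt X
        have hcomp := AnalyticAt.comp (f := fun X' : Fin n → Fin d → ℝ => X' j)
          (x := X) (hφa i (X j)) hproj
        refine analyticAt_const.mul ?_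
        simpa [Function.comp_def] using hcomp
      exact (hterm k).mul (hterm k')
    have hdet : D = fun X' => ∑ σ : Equiv.Perm (Fin r),
        ((Equiv.Perm.sign σ : ℤ) : ℝ) * ∏ k, ent (σ k) k X' := by
      funext X'
      show (Matrix.of fun k k' => ent k k' X').det = _
      rw [Matrix.det_apply']
      refine Finset.sum_congr rfl fun σ _ => ?_
      simp [Units.smul_def, zsmul_eq_mul]
    rw [hdet]
    apply Finset.analyticAt_fun_sum
    intro σ _
    exact analyticAt_const.mul (Finset.analyticAt_fun_prod _ fun k _ => hent (σ k) k)
  -- almost everywhere, the Gram determinant is nonzero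
  have hnull : volume {X : Fin n → Fin d → ℝ | D X = 0} = 0 :=
    analytic_zero_null_mat n d D hDana X₀ hD₀
  have haeD : ∀ᵐ X : Fin n → Fin d → ℝ ∂volume, X ∉ {X : Fin n → Fin d → ℝ | D X = 0} :=
    measure_eq_zero_iff_ae_notMem.mp hnull
  filter_upwards [haeD] with X hDX
  refine ⟨θ, hθ, stepA X ?_⟩
  have hDXne : D X ≠ 0 := hDX
  rw [hDgram] at hDXne
  have hLIX : LinearIndependent ℝ fun k => Φ X (b k) := (gram_det_ne_zero_iff _).mp hDXne
  have hLIb : LinearIndependent ℝ b := LinearIndependent.of_comp (Φ X) hLIX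
  set U := Submodule.span ℝ (Set.range b) with hU
  have hUr : Module.finrank ℝ U = r := by
    rw [hU, finrank_span_eq_card hLIb, Fintype.card_fin]
  have hdisj : LinearMap.ker (Φ X) ⊓ U = ⊥ := by
    rw [eq_bot_iff]
    rintro u hu
    have hu1 : Φ X u = 0 := LinearMap.mem_ker.mp hu.1
    obtain ⟨c, hc⟩ := (Submodule.mem_span_range_iff_exists_fun ℝ).mp hu.2
    have hsum0 : ∑ k, c k • Φ X (b k) = 0 := by
      have : ∑ k, c k • Φ X (b k) = Φ X (∑ k, c k • b k) := by
        rw [map_sum]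
        exact Finset.sum_congr rfl fun k _ => (map_smul (Φ X) (c k) (b k)).symm
      rw [this, hc, hu1]
    have hc0 := Fintype.linearIndependent_iff.mp hLIX c hsum0
    have hu0 : u = 0 := by
      rw [← hc]
      refine Finset.sum_eq_zero fun k _ => ?_
      rw [hc0 k, zero_smul]
    simpa [hu0] using Submodule.zero_mem ⊥
  have hfinle : Module.finrank ℝ (LinearMap.ker (Φ X)) ≤ Module.finrank ℝ W := by
    have hsup := Submodule.finrank_sup_add_finrank_inf_eq (LinearMap.ker (Φ X)) U
    rw [hdisj, finrank_bot, add_zero, hUr] at hsup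
    have hle : Module.finrank ℝ ↥(LinearMap.ker (Φ X) ⊔ U) ≤ M := by
      have := Submodule.finrank_le (LinearMap.ker (Φ X) ⊔ U)
      rwa [Module.finrank_fin_fun] at this
    omega
  have hkerX : W = LinearMap.ker (Φ X) := Submodule.eq_of_le_of_finrank_le (hWle X) hfinle
  intro a ha x
  have haW : a ∈ W := by
    rw [hkerX]
    exact (hkermem X a).mpr ha
  exact (hmemW a).mp haW x
end

section
/- Let σ : ℝ → ℝ be analytic with σ^{(n_j)}(0) ≠ 0 for an infinite sequence of distinct indices n_j. Let w_1, …, w_m ∈ ℝ^d \ {0} be such that w_k ≠ ±w_j for all k ≠ j. Then the functions {σ(w_iᵀx)} ∪ {σ'(w_iᵀx)·x_t : t = 1,…,d}, for i = 1,…,m, are linearly independent as functions of x ∈ ℝ^d. -/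
open Filter Topology Finset

private lemma cdnat {f : ℝ → ℝ} (hf : ContDiff ℝ (⊤:ℕ∞) f) (n : ℕ) : ContDiff ℝ n f :=
  hf.of_le (by exact_mod_cast le_top)

private lemma diffitd {f : ℝ → ℝ} (hf : ContDiff ℝ (⊤:ℕ∞) f) (n : ℕ) :
    Differentiable ℝ (iteratedDeriv n f) :=
  (cdnat hf (n+1)).differentiable_iteratedDeriv n (by exact_mod_cast lt_add_one n)

private lemma itd_add {f g : ℝ → ℝ} (hf : ContDiff ℝ (⊤:ℕ∞) f) (hg : ContDiff ℝ (⊤:ℕ∞) g)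
    (n : ℕ) (x : ℝ) :
    iteratedDeriv n (fun s => f s + g s) x = iteratedDeriv n f x + iteratedDeriv n g x := by
  simp only [← iteratedDerivWithin_univ]
  exact iteratedDerivWithin_add (Set.mem_univ x) uniqueDiffOn_univ
    ((cdnat hf n).contDiffWithinAt) ((cdnat hg n).contDiffWithinAt)

private lemma itd_cmul {f : ℝ → ℝ} (hf : ContDiff ℝ (⊤:ℕ∞) f) (c : ℝ) (n : ℕ) (x : ℝ) :
    iteratedDeriv n (fun s => c * f s) x = c * iteratedDeriv n f x := by
  simp only [← iteratedDerivWithin_univ]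
  exact iteratedDerivWithin_const_mul (Set.mem_univ x) uniqueDiffOn_univ c
    ((cdnat hf n).contDiffWithinAt)

private lemma itd_zero_fun (n : ℕ) (x : ℝ) : iteratedDeriv n (fun _ : ℝ => (0:ℝ)) x = 0 := by
  induction n generalizing x with
  | zero => simp
  | succ n ih =>
    rw [iteratedDeriv_succ']
    simp only [deriv_const']
    exact ih x

private lemma itd_sum {ι : Type*} (S : Finset ι) (f : ι → ℝ → ℝ)
    (hf : ∀ i, ContDiff ℝ (⊤:ℕ∞) (f i)) (n : ℕ) (x : ℝ) :
    iteratedDeriv n (fun s => ∑ i ∈ S, f i s) x = ∑ i ∈ S, iteratedDeriv n (f i) x := by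
  classical
  induction S using Finset.cons_induction with
  | empty => exact itd_zero_fun n x
  | cons i S hi ih =>
    simp only [Finset.sum_cons]
    rw [← ih, itd_add (hf i) (ContDiff.sum fun j _ => hf j) n x]

private lemma itd_id_mul {f : ℝ → ℝ} (hf : ContDiff ℝ (⊤:ℕ∞) f) (n : ℕ) (x : ℝ) :
    iteratedDeriv n (fun s => s * f s) x
      = x * iteratedDeriv n f x + n * iteratedDeriv (n - 1) f x := by
  induction n generalizing x with
  | zero => simp
  | succ n ih =>
    have hder : iteratedDeriv n (fun s => s * f s)
        = fun x => x * iteratedDeriv n f x + (n:ℝ) * iteratedDeriv (n - 1) f x :=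
      funext fun y => ih y
    have h1 : DifferentiableAt ℝ (fun y : ℝ => y * iteratedDeriv n f y) x :=
      differentiableAt_fun_id.mul ((diffitd hf n) x)
    have h2 : DifferentiableAt ℝ (fun y : ℝ => (n:ℝ) * iteratedDeriv (n-1) f y) x :=
      ((diffitd hf (n-1)) x).const_mul _
    rw [iteratedDeriv_succ, hder, deriv_fun_add h1 h2,
      deriv_fun_mul differentiableAt_fun_id ((diffitd hf n) x),
      deriv_const_mul _ ((diffitd hf (n-1)) x)]
    have e1 : deriv (iteratedDeriv n f) x = iteratedDeriv (n+1) f x := by rw [iteratedDeriv_succ]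
    have e2 : (n:ℝ) * deriv (iteratedDeriv (n-1) f) x = (n:ℝ) * iteratedDeriv n f x := by
      cases n with
      | zero => simp
      | succ k =>
        rw [show k + 1 - 1 = k from rfl, ← iteratedDeriv_succ]
    rw [e1, e2]
    simp only [Nat.add_sub_cancel, deriv_id'', one_mul]
    push_cast
    ring

/-- existence of a vector not annihilated by any of finitely many nonzero vectors -/
private lemma exists_transversal {d : ℕ} (V : Finset (Fin d → ℝ)) (hV : ∀ v ∈ V, v ≠ 0) :
    ∃ u : Fin d → ℝ, ∀ v ∈ V, (∑ t, v t * u t) ≠ 0 := by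
  classical
  induction V using Finset.cons_induction with
  | empty => exact ⟨0, by simp⟩
  | cons v₀ V hv₀ ih =>
    obtain ⟨u, hu⟩ := ih (fun v hv => hV v (Finset.mem_cons.2 (Or.inr hv)))
    have hv₀0 : v₀ ≠ 0 := hV v₀ (Finset.mem_cons_self _ _)
    have hpos : 0 < ∑ t, v₀ t * v₀ t := by
      obtain ⟨t0, ht0⟩ := Function.ne_iff.1 hv₀0
      exact Finset.sum_pos' (fun t _ => mul_self_nonneg _)
        ⟨t0, Finset.mem_univ t0, mul_self_pos.2 (by simpa using ht0)⟩
    set T : Finset ℝ := (Finset.cons v₀ V hv₀).image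
      (fun v => -(∑ t, v t * u t) / (∑ t, v t * v₀ t)) with hT
    obtain ⟨s, hs⟩ := Infinite.exists_notMem_finset T
    refine ⟨fun t => u t + s * v₀ t, fun v hv => ?_⟩
    have hexp : (∑ t, v t * (u t + s * v₀ t))
        = (∑ t, v t * u t) + s * (∑ t, v t * v₀ t) := by
      rw [Finset.mul_sum, ← Finset.sum_add_distrib]
      exact Finset.sum_congr rfl fun t _ => by ring
    rw [hexp]
    intro hzero
    by_cases hc : (∑ t, v t * v₀ t) = 0
    · rw [hc, mul_zero, add_zero] at hzero
      rcases Finset.mem_cons.1 hv with rfl | hvV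
      · exact hpos.ne' hc
      · exact hu v hvV hzero
    · apply hs
      rw [hT]
      refine Finset.mem_image.2 ⟨v, hv, ?_⟩
      field_simp
      linarith [hzero]

private lemma keyA {ι : Type*} [DecidableEq ι] (N : Set ℕ) (hN : N.Infinite) :
    ∀ (S : Finset ι) (c a β : ι → ℝ), (∀ i ∈ S, c i ≠ 0) →
    (∀ i ∈ S, ∀ j ∈ S, |c i| = |c j| → i = j) →
    (∀ n ∈ N, 1 ≤ n → ∑ i ∈ S, (a i * c i ^ n + (n:ℝ) * β i * c i ^ (n-1)) = 0) →
    ∀ i ∈ S, a i = 0 ∧ β i = 0 := by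
  have hfreq : ∀ (F : ℕ → ℝ), (∀ n ∈ N, 1 ≤ n → F n = 0) →
      ∀ L : ℝ, Tendsto F atTop (𝓝 L) → L = 0 := by
    intro F hF L hL
    refine tendsto_nhds_unique_of_frequently_eq hL tendsto_const_nhds ?_
    rw [frequently_atTop]
    intro b
    obtain ⟨n, hnN, hbn⟩ := hN.exists_gt b
    exact ⟨n, le_of_lt hbn, hF n hnN (by omega)⟩
  intro S
  induction S using Finset.strongInduction with
  | _ S ih =>
    intro c a β hc hinj hE i hi
    have hSne : S.Nonempty := ⟨i, hi⟩
    obtain ⟨i₀, hi₀, hmax⟩ := Finset.exists_max_image S (fun j => |c j|) hSne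
    have hci₀ : c i₀ ≠ 0 := hc i₀ hi₀
    have habs : 0 < |c i₀| := abs_pos.2 hci₀
    set r : ι → ℝ := fun j => c j / c i₀ with hr
    have hrlt : ∀ j ∈ S, j ≠ i₀ → |r j| < 1 := by
      intro j hj hji
      rw [hr, abs_div, div_lt_one habs]
      rcases (hmax j hj).lt_or_eq with h | h
      · exact h
      · exact absurd (hinj j hj i₀ hi₀ h) hji
    have hri₀ : r i₀ = 1 := div_self hci₀
    have hpow : ∀ j (k : ℕ), r j ^ k * c i₀ ^ k = c j ^ k := by
      intro j k
      rw [hr, ← mul_pow, div_mul_cancel₀ _ hci₀]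
    have hS2 : ∀ n ∈ N, 1 ≤ n →
        ∑ j ∈ S, (a j * c j * r j ^ (n-1) + (n:ℝ) * β j * r j ^ (n-1)) = 0 := by
      intro n hnN hn1
      obtain ⟨k, rfl⟩ := Nat.exists_eq_succ_of_ne_zero (by omega : n ≠ 0)
      have hE' := hE (k+1) hnN hn1
      simp only [Nat.add_sub_cancel] at hE' ⊢
      have hca : c i₀ ^ k ≠ 0 := pow_ne_zero _ hci₀
      have hmul : c i₀ ^ k * ∑ j ∈ S, (a j * c j * r j ^ k + ((k+1:ℕ):ℝ) * β j * r j ^ k)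
          = ∑ j ∈ S, (a j * c j ^ (k+1) + ((k+1:ℕ):ℝ) * β j * c j ^ k) := by
        rw [Finset.mul_sum]
        refine Finset.sum_congr rfl fun j hj => ?_
        have h1 : r j ^ k * c i₀ ^ k = c j ^ k := hpow j k
        have h2 : c j ^ (k+1) = c j ^ k * c j := pow_succ _ _
        rw [h2, ← h1]
        push_cast
        ring
      rw [hE'] at hmul
      exact (mul_eq_zero.1 hmul).resolve_left hca
    have hS1 : ∀ n ∈ N, 1 ≤ n →
        ∑ j ∈ S, (a j * c j * r j ^ (n-1) * (n:ℝ)⁻¹ + β j * r j ^ (n-1)) = 0 := by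
      intro n hnN hn1
      have hn0 : (n:ℝ) ≠ 0 := Nat.cast_ne_zero.2 (by omega)
      have h2 := hS2 n hnN hn1
      have : ∑ j ∈ S, (a j * c j * r j ^ (n-1) * (n:ℝ)⁻¹ + β j * r j ^ (n-1))
          = (n:ℝ)⁻¹ * ∑ j ∈ S, (a j * c j * r j ^ (n-1) + (n:ℝ) * β j * r j ^ (n-1)) := by
        rw [Finset.mul_sum]
        refine Finset.sum_congr rfl fun j hj => ?_
        field_simp
      rw [this, h2, mul_zero]
    -- limits
    have tend1 : Tendsto (fun n : ℕ =>
        ∑ j ∈ S, (a j * c j * r j ^ (n-1) * (n:ℝ)⁻¹ + β j * r j ^ (n-1)))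
        atTop (𝓝 (β i₀)) := by
      have hsum : β i₀ = ∑ j ∈ S, (if j = i₀ then β i₀ else 0) := by
        rw [Finset.sum_ite_eq' S i₀ (fun _ => β i₀), if_pos hi₀]
      rw [hsum]
      refine tendsto_finset_sum _ fun j hj => ?_
      by_cases hji : j = i₀
      · subst hji
        simp only [if_pos rfl, hri₀, one_pow, mul_one]
        have h1 : Tendsto (fun n:ℕ => a j * c j * (n:ℝ)⁻¹) atTop (𝓝 0) := by
          simpa using tendsto_inv_atTop_nhds_zero_nat.const_mul (a j * c j)
        simpa using h1.add (tendsto_const_nhds : Tendsto (fun _ : ℕ => β j) atTop (𝓝 (β j)))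
      · simp only [if_neg hji]
        have hjr := hrlt j hj hji
        have hp : Tendsto (fun n : ℕ => r j ^ (n-1)) atTop (𝓝 0) :=
          (tendsto_pow_atTop_nhds_zero_of_abs_lt_one hjr).comp (tendsto_sub_atTop_nat 1)
        have h1 : Tendsto (fun n:ℕ => a j * c j * r j ^ (n-1) * (n:ℝ)⁻¹) atTop (𝓝 0) := by
          simpa using (hp.const_mul (a j * c j)).mul tendsto_inv_atTop_nhds_zero_nat
        have h2 : Tendsto (fun n:ℕ => β j * r j ^ (n-1)) atTop (𝓝 0) := by
          simpa using hp.const_mul (β j)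
        simpa using h1.add h2
    have hβ0 : β i₀ = 0 := hfreq _ hS1 _ tend1
    have tend2 : Tendsto (fun n : ℕ =>
        ∑ j ∈ S, (a j * c j * r j ^ (n-1) + (n:ℝ) * β j * r j ^ (n-1)))
        atTop (𝓝 (a i₀ * c i₀)) := by
      have hsum : a i₀ * c i₀ = ∑ j ∈ S, (if j = i₀ then a i₀ * c i₀ else 0) := by
        rw [Finset.sum_ite_eq' S i₀ (fun _ => a i₀ * c i₀), if_pos hi₀]
      rw [hsum]
      refine tendsto_finset_sum _ fun j hj => ?_
      by_cases hji : j = i₀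
      · subst hji
        simp only [if_pos rfl, hri₀, one_pow, mul_one, hβ0, mul_zero, zero_mul, add_zero]
        exact tendsto_const_nhds
      · simp only [if_neg hji]
        have hjr := hrlt j hj hji
        have hp : Tendsto (fun n : ℕ => r j ^ (n-1)) atTop (𝓝 0) :=
          (tendsto_pow_atTop_nhds_zero_of_abs_lt_one hjr).comp (tendsto_sub_atTop_nat 1)
        have h1 : Tendsto (fun n:ℕ => a j * c j * r j ^ (n-1)) atTop (𝓝 0) := by
          simpa using hp.const_mul (a j * c j)
        have hbase : Tendsto (fun k:ℕ => ((k:ℝ)+1) * r j ^ k) atTop (𝓝 0) := by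
          have ha' := tendsto_self_mul_const_pow_of_abs_lt_one hjr
          have hb' := tendsto_pow_atTop_nhds_zero_of_abs_lt_one hjr
          have := ha'.add hb'
          simp only [add_zero] at this
          exact this.congr fun k => by ring
        have h2' : Tendsto (fun n:ℕ => ((((n-1:ℕ)):ℝ)+1) * r j ^ (n-1)) atTop (𝓝 0) :=
          hbase.comp (tendsto_sub_atTop_nat 1)
        have h2 : Tendsto (fun n:ℕ => (n:ℝ) * β j * r j ^ (n-1)) atTop (𝓝 0) := by
          have h3 : Tendsto (fun n:ℕ => β j * (((((n-1:ℕ)):ℝ)+1) * r j ^ (n-1)))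
              atTop (𝓝 0) := by simpa using h2'.const_mul (β j)
          refine (Tendsto.congr' ?_ h3)
          filter_upwards [eventually_ge_atTop 1] with n hn
          have : (((n-1:ℕ)):ℝ) = (n:ℝ) - 1 := by
            push_cast [Nat.cast_sub hn]
            ring
          rw [this]
          ring
        simpa using h1.add h2
    have hac : a i₀ * c i₀ = 0 := hfreq _ hS2 _ tend2
    have ha0 : a i₀ = 0 := by
      rcases mul_eq_zero.1 hac with h | h
      · exact h
      · exact absurd h hci₀
    -- recurse on the erased set
    have hrec : ∀ j ∈ S.erase i₀, a j = 0 ∧ β j = 0 := by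
      refine ih (S.erase i₀) (Finset.erase_ssubset hi₀) c a β
        (fun j hj => hc j (Finset.mem_of_mem_erase hj))
        (fun j hj j' hj' => hinj j (Finset.mem_of_mem_erase hj) j' (Finset.mem_of_mem_erase hj'))
        ?_
      intro n hnN hn1
      rw [Finset.sum_erase_eq_sub hi₀, hE n hnN hn1, ha0, hβ0]
      simp
    rcases eq_or_ne i i₀ with rfl | hii
    · exact ⟨ha0, hβ0⟩
    · exact hrec i (Finset.mem_erase.2 ⟨hii, hi⟩)

/-- linear independence of neuron functions and their input-weight
derivative functions, for an analytic activation with infinitely many nonvanishing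
derivatives at `0` and pairwise non-antipodal nonzero weights. -/
theorem neuron_linear_independence {d m : ℕ} (σ : ℝ → ℝ)
    (hσ : ∀ x : ℝ, AnalyticAt ℝ σ x)
    (hder : ∃ nseq : ℕ → ℕ, Function.Injective nseq ∧ ∀ j, iteratedDeriv (nseq j) σ 0 ≠ 0)
    (w : Fin m → Fin d → ℝ) (hw0 : ∀ i, w i ≠ 0)
    (hw : ∀ k j, k ≠ j → w k ≠ w j ∧ w k ≠ -w j) :
    LinearIndependent ℝ
      (Sum.elim
        (fun i : Fin m => fun x : Fin d → ℝ => σ (∑ t, w i t * x t))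
        (fun p : Fin m × Fin d => fun x : Fin d → ℝ =>
          deriv σ (∑ t, w p.1 t * x t) * x p.2)) := by
  classical
  obtain ⟨nseq, hinjseq, hne⟩ := hder
  have hσOn : AnalyticOnNhd ℝ σ Set.univ := fun x _ => hσ x
  have hσC : ContDiff ℝ (⊤:ℕ∞) σ := contDiff_iff_contDiffAt.2 fun x => (hσ x).contDiffAt
  have hσd : ∀ x : ℝ, AnalyticAt ℝ (deriv σ) x := fun x => hσOn.deriv x (Set.mem_univ x)
  have hσ'C : ContDiff ℝ (⊤:ℕ∞) (deriv σ) :=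
    contDiff_iff_contDiffAt.2 fun x => (hσd x).contDiffAt
  rw [Fintype.linearIndependent_iff]
  intro g hg
  have key : ∀ x : Fin d → ℝ,
      (∑ i, g (Sum.inl i) * σ (∑ t, w i t * x t))
      + ∑ i, ∑ t, g (Sum.inr (i, t)) * (deriv σ (∑ t', w i t' * x t') * x t) = 0 := by
    intro x
    have h := congrFun hg x
    simpa [Fintype.sum_sum_type, Fintype.sum_prod_type, Finset.sum_apply, Pi.smul_apply,
      smul_eq_mul] using h
  -- separating vectors
  set V : Finset (Fin d → ℝ) :=
    ((Finset.univ.image w)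
    ∪ (((Finset.univ ×ˢ Finset.univ : Finset (Fin m × Fin m)).filter
        (fun p => p.1 ≠ p.2)).image (fun p => w p.1 - w p.2)))
    ∪ (((Finset.univ ×ˢ Finset.univ : Finset (Fin m × Fin m)).filter
        (fun p => p.1 ≠ p.2)).image (fun p => w p.1 + w p.2)) with hV
  have hVmem1 : ∀ i, w i ∈ V := fun i =>
    Finset.mem_union_left _ (Finset.mem_union_left _
      (Finset.mem_image_of_mem w (Finset.mem_univ i)))
  have hVmem2 : ∀ i j : Fin m, i ≠ j → w i - w j ∈ V := fun i j hij =>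
    Finset.mem_union_left _ (Finset.mem_union_right _
      (Finset.mem_image.2 ⟨(i, j), Finset.mem_filter.2
        ⟨Finset.mem_product.2 ⟨Finset.mem_univ _, Finset.mem_univ _⟩, hij⟩, rfl⟩))
  have hVmem3 : ∀ i j : Fin m, i ≠ j → w i + w j ∈ V := fun i j hij =>
    Finset.mem_union_right _
      (Finset.mem_image.2 ⟨(i, j), Finset.mem_filter.2
        ⟨Finset.mem_product.2 ⟨Finset.mem_univ _, Finset.mem_univ _⟩, hij⟩, rfl⟩)
  have hV0 : ∀ v ∈ V, v ≠ 0 := by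
    intro v hv
    simp only [hV, Finset.mem_union, Finset.mem_image, Finset.mem_filter,
      Finset.mem_product, Finset.mem_univ, true_and] at hv
    rcases hv with (⟨i, _, rfl⟩ | ⟨p, hp, rfl⟩) | ⟨p, hp, rfl⟩
    · exact hw0 i
    · exact sub_ne_zero.2 (hw p.1 p.2 hp).1
    · intro h
      exact (hw p.1 p.2 hp).2 (eq_neg_of_add_eq_zero_left h)
  -- the main estimate for "good" directions e
  have good : ∀ e : Fin d → ℝ, (∀ v ∈ V, (∑ t, v t * e t) ≠ 0) →
      (∀ i : Fin m, g (Sum.inl i) = 0) ∧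
      (∀ i : Fin m, ∑ t, g (Sum.inr (i, t)) * e t = 0) := by
    intro e he
    set c : Fin m → ℝ := fun i => ∑ t, w i t * e t with hcdef
    set β : Fin m → ℝ := fun i => ∑ t, g (Sum.inr (i, t)) * e t with hβdef
    have hc0 : ∀ i, c i ≠ 0 := fun i => he (w i) (hVmem1 i)
    have hcinj : ∀ i j : Fin m, |c i| = |c j| → i = j := by
      intro i j hij
      by_contra hne'
      rcases abs_eq_abs.1 hij with h | h
      · refine he (w i - w j) (hVmem2 i j hne') ?_
        have : ∑ t, (w i - w j) t * e t = c i - c j := by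
          simp only [Pi.sub_apply, sub_mul]
          rw [Finset.sum_sub_distrib]
        rw [this, h, sub_self]
      · refine he (w i + w j) (hVmem3 i j hne') ?_
        have : ∑ t, (w i + w j) t * e t = c i + c j := by
          simp only [Pi.add_apply, add_mul]
          rw [Finset.sum_add_distrib]
        rw [this, h]
        ring
    set G : ℝ → ℝ := fun s =>
      (∑ i, g (Sum.inl i) * σ (c i * s)) + ∑ i, β i * (s * deriv σ (c i * s)) with hGdef
    have hG0 : ∀ s, G s = 0 := by
      intro s
      have hk := key (fun t => s * e t)
      have harg : ∀ i : Fin m, (∑ t, w i t * (s * e t)) = c i * s := by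
        intro i
        rw [hcdef]
        simp only []
        rw [Finset.sum_mul]
        exact Finset.sum_congr rfl fun t _ => by ring
      rw [hGdef]
      simp only []
      have h1 : ∀ i : Fin m, g (Sum.inl i) * σ (c i * s)
          = g (Sum.inl i) * σ (∑ t, w i t * (s * e t)) := by
        intro i; rw [harg i]
      have h2 : ∀ i : Fin m, β i * (s * deriv σ (c i * s))
          = ∑ t, g (Sum.inr (i, t)) * (deriv σ (∑ t', w i t' * (s * e t')) * (s * e t)) := by
        intro i
        rw [harg i, hβdef]
        simp only []
        rw [Finset.sum_mul]
        exact Finset.sum_congr rfl fun t _ => by ring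
      calc (∑ i, g (Sum.inl i) * σ (c i * s)) + ∑ i, β i * (s * deriv σ (c i * s))
          = (∑ i, g (Sum.inl i) * σ (∑ t, w i t * (s * e t)))
            + ∑ i, ∑ t, g (Sum.inr (i, t))
              * (deriv σ (∑ t', w i t' * (s * e t')) * (s * e t)) := by
            rw [Finset.sum_congr rfl fun i _ => h1 i, Finset.sum_congr rfl fun i _ => h2 i]
        _ = 0 := hk
    have hcomp : ∀ i : Fin m, ContDiff ℝ (⊤:ℕ∞) (fun s : ℝ => σ (c i * s)) :=
      fun i => hσC.comp (contDiff_const.mul contDiff_id)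
    have hcomp' : ∀ i : Fin m, ContDiff ℝ (⊤:ℕ∞) (fun s : ℝ => deriv σ (c i * s)) :=
      fun i => hσ'C.comp (contDiff_const.mul contDiff_id)
    have hidmul : ∀ i : Fin m, ContDiff ℝ (⊤:ℕ∞) (fun s : ℝ => s * deriv σ (c i * s)) :=
      fun i => contDiff_id.mul (hcomp' i)
    have hterm1 : ∀ i : Fin m, ContDiff ℝ (⊤:ℕ∞) (fun s => g (Sum.inl i) * σ (c i * s)) :=
      fun i => contDiff_const.mul (hσC.comp (contDiff_const.mul contDiff_id))
    have hterm2 : ∀ i : Fin m,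
        ContDiff ℝ (⊤:ℕ∞) (fun s => β i * (s * deriv σ (c i * s))) :=
      fun i => contDiff_const.mul (contDiff_id.mul (hcomp' i))
    have main_calc : ∀ k : ℕ,
        iteratedDeriv (k+1) G 0
          = ∑ i, g (Sum.inl i) * (c i ^ (k+1) * iteratedDeriv (k+1) σ 0)
            + ∑ i, β i * (0 * iteratedDeriv (k+1) (fun s => deriv σ (c i * s)) 0
                + ((k+1:ℕ):ℝ) * (c i ^ k * iteratedDeriv (k+1) σ 0)) := by
      intro k
      rw [hGdef]
      rw [itd_add (ContDiff.sum fun i _ => hterm1 i) (ContDiff.sum fun i _ => hterm2 i),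
        itd_sum _ _ (fun i => hterm1 i), itd_sum _ _ (fun i => hterm2 i)]
      congr 1
      · refine Finset.sum_congr rfl fun i _ => ?_
        rw [itd_cmul (hcomp i),
          congrFun (iteratedDeriv_comp_const_mul (cdnat hσC (k+1)) (c i)) 0, mul_zero]
      · refine Finset.sum_congr rfl fun i _ => ?_
        rw [itd_cmul (hidmul i), itd_id_mul (hcomp' i) (k+1) 0]
        have hstep : iteratedDeriv ((k+1)-1) (fun s => deriv σ (c i * s)) 0
            = c i ^ k * iteratedDeriv (k+1) σ 0 := by
          simp only [Nat.add_sub_cancel]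
          rw [congrFun (iteratedDeriv_comp_const_mul (cdnat hσ'C k) (c i)) 0, mul_zero,
            ← iteratedDeriv_succ']
        simp only [Nat.add_sub_cancel]
        rw [Nat.add_sub_cancel] at hstep
        rw [hstep]
    have hEn : ∀ n ∈ Set.range nseq, 1 ≤ n →
        ∑ i, (g (Sum.inl i) * c i ^ n + (n:ℝ) * β i * c i ^ (n-1)) = 0 := by
      rintro n ⟨j, rfl⟩ hn1
      obtain ⟨k, hk⟩ := Nat.exists_eq_succ_of_ne_zero (by omega : nseq j ≠ 0)
      rw [hk]
      have h0 : iteratedDeriv (k+1) G 0 = 0 := by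
        have : G = fun _ : ℝ => (0:ℝ) := funext hG0
        rw [this]
        exact itd_zero_fun _ _
      have heq := (main_calc k).symm.trans h0
      have hfact : (∑ i, g (Sum.inl i) * (c i ^ (k+1) * iteratedDeriv (k+1) σ 0)
            + ∑ i, β i * (0 * iteratedDeriv (k+1) (fun s => deriv σ (c i * s)) 0
                + ((k+1:ℕ):ℝ) * (c i ^ k * iteratedDeriv (k+1) σ 0)))
          = iteratedDeriv (k+1) σ 0
            * ∑ i, (g (Sum.inl i) * c i ^ (k+1) + ((k+1:ℕ):ℝ) * β i * c i ^ ((k+1)-1)) := by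
        rw [Finset.mul_sum, ← Finset.sum_add_distrib]
        refine Finset.sum_congr rfl fun i _ => ?_
        simp only [Nat.add_sub_cancel]
        push_cast
        ring
      rw [hfact] at heq
      have hD : iteratedDeriv (k+1) σ 0 ≠ 0 := by
        have h := hne j
        rw [hk] at h
        exact h
      exact (mul_eq_zero.1 heq).resolve_left hD
    have hkA := keyA (Set.range nseq) (Set.infinite_range_of_injective hinjseq)
      Finset.univ c (fun i => g (Sum.inl i)) β (fun i _ => hc0 i)
      (fun i _ j _ h => hcinj i j h) hEn
    exact ⟨fun i => (hkA i (Finset.mem_univ i)).1, fun i => (hkA i (Finset.mem_univ i)).2⟩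
  obtain ⟨u, hu⟩ := exists_transversal V hV0
  have hgu := good u hu
  rintro (i | ⟨i, t⟩)
  · exact hgu.1 i
  · -- kill the coefficient of the derivative terms
    have hφu : ∑ t', g (Sum.inr (i, t')) * u t' = 0 := hgu.2 i
    set y : Fin d → ℝ := Pi.single t 1 with hy
    set T : Finset ℝ := V.image (fun v => -(∑ t', v t' * y t') / (∑ t', v t' * u t')) with hT
    obtain ⟨s, hs⟩ := Infinite.exists_notMem_finset T
    have hgood2 : ∀ v ∈ V, (∑ t', v t' * (y t' + s * u t')) ≠ 0 := by
      intro v hv h0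
      have hexp : (∑ t', v t' * (y t' + s * u t'))
          = (∑ t', v t' * y t') + s * (∑ t', v t' * u t') := by
        rw [Finset.mul_sum, ← Finset.sum_add_distrib]
        exact Finset.sum_congr rfl fun t' _ => by ring
      rw [hexp] at h0
      have hvu := hu v hv
      apply hs
      rw [hT]
      refine Finset.mem_image.2 ⟨v, hv, ?_⟩
      field_simp
      linarith
    have h2 := (good _ hgood2).2 i
    have hexp2 : (∑ t', g (Sum.inr (i, t')) * (y t' + s * u t'))
        = (∑ t', g (Sum.inr (i, t')) * y t') + s * (∑ t', g (Sum.inr (i, t')) * u t') := by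
      rw [Finset.mul_sum, ← Finset.sum_add_distrib]
      exact Finset.sum_congr rfl fun t' _ => by ring
    rw [hexp2, hφu, mul_zero, add_zero] at h2
    have hsingle : (∑ t', g (Sum.inr (i, t')) * y t') = g (Sum.inr (i, t)) := by
      rw [hy]
      simp [Pi.single_apply, mul_ite]
    rw [hsingle] at h2
    exact h2
end

section
/- Let σ = tanh. Given weights w_1, …, w_m ∈ ℝ^d and output weights a_1, …, a_m ∈ ℝ, the dimension of span{σ(w_iᵀx), a_i σ'(w_iᵀx)x_1, …, a_i σ'(w_iᵀx)x_d}_{i=1}^m equals m_w + m_a·d, where m_w = (1/2)|{w_i, −w_i : w_i ≠ 0}| and m_a = (1/2)|{w_i, −w_i : w_i ≠ 0, a_i ≠ 0}| + |{i-distinct zero weights with a_i ≠ 0 counted as one if any}| (i.e., m_a counts independent effective neurons, with all zero-weight neurons having nonzero a contributing a single block of dimension d). -/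
open Real Filter Finset Polynomial

lemma one_add_exp_pos (y : ℝ) : 0 < 1 + exp y := by positivity

lemma tanh_sub_one (y : ℝ) : Real.tanh y - 1 = -2 * exp (-(2*y)) / (1 + exp (-(2*y))) := by
  rw [Real.tanh_eq_sinh_div_cosh, Real.sinh_eq, Real.cosh_eq]
  have h2 : (0:ℝ) < 1 + exp (-(2*y)) := one_add_exp_pos _
  have h3 : (0:ℝ) < exp y + exp (-y) := by positivity
  have e1 : exp (-(2*y)) = exp (-y) * exp (-y) := by rw [← Real.exp_add]; ring_nf
  have e2 : exp y * exp (-y) = 1 := by rw [← Real.exp_add]; simp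
  field_simp
  rw [show y * 2 = 2 * y by ring, e1]
  linear_combination (2 * exp (-y)) * e2

lemma one_sub_tanh_sq (y : ℝ) : 1 - Real.tanh y ^ 2 = 4 * exp (-(2*y)) / (1 + exp (-(2*y)))^2 := by
  rw [Real.tanh_eq_sinh_div_cosh, Real.sinh_eq, Real.cosh_eq]
  have h2 : (0:ℝ) < 1 + exp (-(2*y)) := one_add_exp_pos _
  have h3 : (0:ℝ) < exp y + exp (-y) := by positivity
  have e1 : exp (-(2*y)) = exp (-y) * exp (-y) := by rw [← Real.exp_add]; ring_nf
  have e2 : exp y * exp (-y) = 1 := by rw [← Real.exp_add]; simp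
  field_simp
  rw [show y * 2 = 2 * y by ring, e1]
  linear_combination (4*exp (-y)^4 - 4* exp y * exp (-y)) * e2


lemma hasDerivAt_tanh (y : ℝ) : HasDerivAt Real.tanh (1 - Real.tanh y ^ 2) y := by
  have h : HasDerivAt (fun x => Real.sinh x / Real.cosh x)
      ((Real.cosh y * Real.cosh y - Real.sinh y * Real.sinh y) / Real.cosh y ^ 2) y :=
    (Real.hasDerivAt_sinh y).div (Real.hasDerivAt_cosh y) (Real.cosh_pos y).ne'
  have ht : Real.tanh = fun x => Real.sinh x / Real.cosh x := by
    funext x; exact Real.tanh_eq_sinh_div_cosh x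
  rw [ht]
  convert h using 1
  have hc := Real.cosh_pos y
  simp only [Real.tanh_eq_sinh_div_cosh]
  field_simp

lemma deriv_tanh (y : ℝ) : deriv Real.tanh y = 1 - Real.tanh y ^ 2 :=
  (hasDerivAt_tanh y).deriv

lemma tendsto_mul_self_atTop {c : ℝ} (hc : 0 < c) :
    Tendsto (fun s : ℝ => c * s) atTop atTop :=
  Tendsto.const_mul_atTop hc tendsto_id

lemma exp_neg_mul_tendsto {c : ℝ} (hc : 0 < c) :
    Tendsto (fun s : ℝ => exp (-(c * s))) atTop (nhds 0) := by
  exact (Real.tendsto_exp_neg_atTop_nhds_zero.comp (tendsto_mul_self_atTop hc)).congr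
    (fun s => rfl)

lemma mul_exp_neg_mul_tendsto {c : ℝ} (hc : 0 < c) :
    Tendsto (fun s : ℝ => s * exp (-(c * s))) atTop (nhds 0) := by
  have h1 := (Real.tendsto_pow_mul_exp_neg_atTop_nhds_zero 1).comp (tendsto_mul_self_atTop hc)
  have h2 := h1.const_mul c⁻¹
  simp only [Function.comp, pow_one, mul_zero] at h2
  refine h2.congr fun s => ?_
  field_simp

lemma exp_neg_two_mul_tendsto {c : ℝ} (hc : 0 < c) :
    Tendsto (fun s : ℝ => exp (-(2 * (c * s)))) atTop (nhds 0) :=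
  (exp_neg_mul_tendsto (mul_pos two_pos hc)).congr fun s => by ring_nf

-- T1
lemma T1 {c : ℝ} (hc : 0 < c) : Tendsto (fun s : ℝ => Real.tanh (c * s)) atTop (nhds 1) := by
  have hu := exp_neg_two_mul_tendsto hc
  have h2 : Tendsto (fun s : ℝ => 1 + -2 * exp (-(2 * (c*s))) / (1 + exp (-(2 * (c*s))))) atTop
      (nhds (1 + -2 * 0 / (1 + 0))) :=
    tendsto_const_nhds.add ((hu.const_mul (-2)).div (hu.const_add 1) (by norm_num))
  norm_num at h2
  refine h2.congr fun s => ?_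
  have h := tanh_sub_one (c * s)
  rw [neg_mul] at h
  linarith [h]

-- T8
lemma T8 {b : ℝ} (hb : 0 < b) : Tendsto (fun s : ℝ => 1 - Real.tanh (b * s) ^ 2) atTop (nhds 0) := by
  have h2 : Tendsto (fun s : ℝ => 1 - Real.tanh (b*s)^2) atTop (nhds (1 - 1^2)) :=
    tendsto_const_nhds.sub ((T1 hb).pow 2)
  norm_num at h2; exact h2

-- T2
lemma T2 {b : ℝ} (hb : 0 < b) :
    Tendsto (fun s : ℝ => s * (1 - Real.tanh (b * s) ^ 2)) atTop (nhds 0) := by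
  have hu := exp_neg_two_mul_tendsto hb
  have hsu : Tendsto (fun s : ℝ => s * exp (-(2 * (b * s)))) atTop (nhds 0) :=
    (mul_exp_neg_mul_tendsto (mul_pos two_pos hb)).congr fun s => by ring_nf
  have h2 : Tendsto (fun s : ℝ => 4 * (s * exp (-(2*(b*s)))) / (1 + exp (-(2*(b*s))))^2) atTop
      (nhds (4 * 0 / (1 + 0)^2)) :=
    (hsu.const_mul 4).div ((hu.const_add 1).pow 2) (by norm_num)
  norm_num at h2
  refine h2.congr fun s => ?_
  rw [one_sub_tanh_sq (b*s)]
  ring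

-- T3 : c = m case
lemma T3 {c : ℝ} (hc : 0 < c) :
    Tendsto (fun s : ℝ => exp (2*c*s) * (Real.tanh (c * s) - 1)) atTop (nhds (-2)) := by
  have hu := exp_neg_two_mul_tendsto hc
  have h2 : Tendsto (fun s : ℝ => -2 / (1 + exp (-(2*(c*s))))) atTop (nhds (-2 / (1+0))) :=
    tendsto_const_nhds.div (hu.const_add 1) (by norm_num)
  norm_num at h2
  refine h2.congr fun s => ?_
  have he : exp (2*c*s) * exp (-(2*(c*s))) = 1 := by
    rw [← Real.exp_add]; ring_nf; exact Real.exp_zero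
  rw [tanh_sub_one (c*s)]
  calc -2 / (1 + exp (-(2*(c*s))))
      = -2 * (exp (2*c*s) * exp (-(2*(c*s)))) / (1 + exp (-(2*(c*s)))) := by rw [he]; norm_num
    _ = exp (2*c*s) * (-2 * exp (-(2*(c*s))) / (1 + exp (-(2*(c*s))))) := by ring

-- T4 : m < c case
lemma T4 {m c : ℝ} (hm : 0 < m) (hc : m < c) :
    Tendsto (fun s : ℝ => exp (2*m*s) * (Real.tanh (c * s) - 1)) atTop (nhds 0) := by
  have hu := exp_neg_two_mul_tendsto (hm.trans hc)
  have hv : Tendsto (fun s : ℝ => exp (-(2*(c-m) * s))) atTop (nhds 0) :=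
    exp_neg_mul_tendsto (by linarith)
  have h2 : Tendsto (fun s : ℝ => -2 * exp (-(2*(c-m)*s)) / (1 + exp (-(2*(c*s))))) atTop
      (nhds (-2 * 0 / (1 + 0))) :=
    (hv.const_mul (-2)).div (hu.const_add 1) (by norm_num)
  norm_num at h2
  refine h2.congr fun s => ?_
  have he : exp (2*m*s) * exp (-(2*(c*s))) = exp (-(2*(c-m)*s)) := by
    rw [← Real.exp_add]; ring_nf
  rw [tanh_sub_one (c*s)]
  calc -(2 * exp (-(2*(c-m)*s))) / (1 + exp (-(2*(c*s))))
      = -2 * (exp (2*m*s) * exp (-(2*(c*s)))) / (1 + exp (-(2*(c*s)))) := by rw [he]; ring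
    _ = exp (2*m*s) * (-2 * exp (-(2*(c*s))) / (1 + exp (-(2*(c*s))))) := by ring

-- T5 : b = m
lemma T5 {b : ℝ} (hb : 0 < b) :
    Tendsto (fun s : ℝ => exp (2*b*s) * (1 - Real.tanh (b * s)^2)) atTop (nhds 4) := by
  have hu := exp_neg_two_mul_tendsto hb
  have h2 : Tendsto (fun s : ℝ => 4 / (1 + exp (-(2*(b*s))))^2) atTop (nhds (4 / (1+0)^2)) :=
    tendsto_const_nhds.div ((hu.const_add 1).pow 2) (by norm_num)
  norm_num at h2
  refine h2.congr fun s => ?_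
  have he : exp (2*b*s) * exp (-(2*(b*s))) = 1 := by
    rw [← Real.exp_add]; ring_nf; exact Real.exp_zero
  rw [one_sub_tanh_sq (b*s)]
  calc 4 / (1 + exp (-(2*(b*s))))^2
      = 4 * (exp (2*b*s) * exp (-(2*(b*s)))) / (1 + exp (-(2*(b*s))))^2 := by rw [he]; norm_num
    _ = exp (2*b*s) * (4 * exp (-(2*(b*s))) / (1 + exp (-(2*(b*s))))^2) := by ring

-- T6 : m < b
lemma T6 {m b : ℝ} (hb : 0 < b) (hc : m < b) :
    Tendsto (fun s : ℝ => exp (2*m*s) * (1 - Real.tanh (b * s)^2)) atTop (nhds 0) := by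
  have hu := exp_neg_two_mul_tendsto hb
  have hv : Tendsto (fun s : ℝ => exp (-(2*(b-m) * s))) atTop (nhds 0) :=
    exp_neg_mul_tendsto (by linarith)
  have h2 : Tendsto (fun s : ℝ => 4 * exp (-(2*(b-m)*s)) / (1 + exp (-(2*(b*s))))^2) atTop
      (nhds (4 * 0 / (1 + 0)^2)) :=
    (hv.const_mul 4).div ((hu.const_add 1).pow 2) (by norm_num)
  norm_num at h2
  refine h2.congr fun s => ?_
  have he : exp (2*m*s) * exp (-(2*(b*s))) = exp (-(2*(b-m)*s)) := by
    rw [← Real.exp_add]; ring_nf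
  rw [one_sub_tanh_sq (b*s)]
  calc 4 * exp (-(2*(b-m)*s)) / (1 + exp (-(2*(b*s))))^2
      = 4 * (exp (2*m*s) * exp (-(2*(b*s)))) / (1 + exp (-(2*(b*s))))^2 := by rw [he]
    _ = exp (2*m*s) * (4 * exp (-(2*(b*s))) / (1 + exp (-(2*(b*s))))^2) := by ring

-- T7 : m < b with extra s factor
lemma T7 {m b : ℝ} (hb : 0 < b) (hc : m < b) :
    Tendsto (fun s : ℝ => exp (2*m*s) * (s * (1 - Real.tanh (b * s)^2))) atTop (nhds 0) := by
  have hu := exp_neg_two_mul_tendsto hb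
  have hv : Tendsto (fun s : ℝ => s * exp (-(2*(b-m) * s))) atTop (nhds 0) :=
    mul_exp_neg_mul_tendsto (by linarith)
  have h2 : Tendsto (fun s : ℝ => 4 * (s * exp (-(2*(b-m)*s))) / (1 + exp (-(2*(b*s))))^2) atTop
      (nhds (4 * 0 / (1 + 0)^2)) :=
    (hv.const_mul 4).div ((hu.const_add 1).pow 2) (by norm_num)
  norm_num at h2
  refine h2.congr fun s => ?_
  have he : exp (2*m*s) * exp (-(2*(b*s))) = exp (-(2*(b-m)*s)) := by
    rw [← Real.exp_add]; ring_nf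
  rw [one_sub_tanh_sq (b*s)]
  calc 4 * (s * exp (-(2*(b-m)*s))) / (1 + exp (-(2*(b*s))))^2
      = 4 * (s * (exp (2*m*s) * exp (-(2*(b*s))))) / (1 + exp (-(2*(b*s))))^2 := by rw [he]
    _ = exp (2*m*s) * (s * (4 * exp (-(2*(b*s))) / (1 + exp (-(2*(b*s))))^2)) := by ring

theorem oneD (ι κ : Type*) [DecidableEq ι] [DecidableEq κ] :
    ∀ (n : ℕ) (C : Finset ι) (B : Finset κ) (c : ι → ℝ) (b : κ → ℝ) (α : ι → ℝ) (β : κ → ℝ),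
    C.card + B.card = n →
    (∀ i ∈ C, 0 < c i) → (∀ j ∈ B, 0 ≤ b j) →
    Set.InjOn c C → Set.InjOn b B →
    (∀ s : ℝ, ∑ i ∈ C, α i * Real.tanh (c i * s)
      + ∑ j ∈ B, β j * (s * (1 - Real.tanh (b j * s) ^ 2)) = 0) →
    (∀ i ∈ C, α i = 0) ∧ (∀ j ∈ B, β j = 0) := by
  intro n
  induction n using Nat.strong_induction_on with
  | _ n IH =>
  intro C B c b α β hn hc hb hcinj hbinj heq
  by_cases hempty : C = ∅ ∧ B = ∅
  · constructor
    · intro i hi; rw [hempty.1] at hi; exact absurd hi (Finset.notMem_empty i)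
    · intro j hj; rw [hempty.2] at hj; exact absurd hj (Finset.notMem_empty j)
  have hM : (C.image c ∪ B.image b).Nonempty := by
    rcases Finset.eq_empty_or_nonempty C with hC | hC
    · rcases Finset.eq_empty_or_nonempty B with hB | hB
      · exact absurd ⟨hC, hB⟩ hempty
      · exact Finset.Nonempty.inr (hB.image b)
    · exact Finset.Nonempty.inl (hC.image c)
  set M := C.image c ∪ B.image b with hMdef
  set m := M.min' hM with hmdef
  have hmc : ∀ i ∈ C, m ≤ c i := fun i hi =>
    Finset.min'_le _ _ (Finset.mem_union_left _ (Finset.mem_image_of_mem c hi))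
  have hmb : ∀ j ∈ B, m ≤ b j := fun j hj =>
    Finset.min'_le _ _ (Finset.mem_union_right _ (Finset.mem_image_of_mem b hj))
  have hmmem : m ∈ M := Finset.min'_mem _ _
  have hm0 : 0 ≤ m := by
    rcases Finset.mem_union.1 hmmem with h | h
    · obtain ⟨i, hi, him⟩ := Finset.mem_image.1 h; rw [← him]; exact (hc i hi).le
    · obtain ⟨j, hj, hjm⟩ := Finset.mem_image.1 h; rw [← hjm]; exact hb j hj
  by_cases hmpos : 0 < m
  · -- main branch : all weights positive
    have hbpos : ∀ j ∈ B, 0 < b j := fun j hj => lt_of_lt_of_le hmpos (hmb j hj)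
    -- Step 1 : sum of alphas is zero
    have hsum : ∑ i ∈ C, α i = 0 := by
      have hlim : Tendsto (fun s : ℝ => ∑ i ∈ C, α i * Real.tanh (c i * s)
          + ∑ j ∈ B, β j * (s * (1 - Real.tanh (b j * s) ^ 2))) atTop
          (nhds (∑ i ∈ C, α i * 1 + ∑ j ∈ B, β j * 0)) := by
        refine Tendsto.add (tendsto_finset_sum _ fun i hi => (T1 (hc i hi)).const_mul (α i))
          (tendsto_finset_sum _ fun j hj => (T2 (hbpos j hj)).const_mul (β j))
      have h0 : Tendsto (fun s : ℝ => ∑ i ∈ C, α i * Real.tanh (c i * s)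
          + ∑ j ∈ B, β j * (s * (1 - Real.tanh (b j * s) ^ 2))) atTop (nhds 0) := by
        refine tendsto_const_nhds.congr fun s => (heq s).symm
      have := tendsto_nhds_unique hlim h0
      simpa using this
    -- Step 2 : equation in (tanh - 1) form
    have hG : ∀ s : ℝ, ∑ i ∈ C, α i * (Real.tanh (c i * s) - 1)
        + ∑ j ∈ B, β j * (s * (1 - Real.tanh (b j * s) ^ 2)) = 0 := by
      intro s
      have h1 : ∑ i ∈ C, α i * (Real.tanh (c i * s) - 1)
          = ∑ i ∈ C, α i * Real.tanh (c i * s) - ∑ i ∈ C, α i := by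
        rw [← Finset.sum_sub_distrib]
        exact Finset.sum_congr rfl fun i _ => by ring
      rw [h1, hsum]
      have := heq s
      linarith
    -- Step 3 : betas at level m vanish
    have hβm : ∀ j₀ ∈ B, b j₀ = m → β j₀ = 0 := by
      intro j₀ hj₀ hbj₀
      have hlim : Tendsto (fun s : ℝ => Real.exp (2*m*s)
          * (∑ i ∈ C, α i * (Real.tanh (c i * s) - 1)
            + ∑ j ∈ B, β j * (s * (1 - Real.tanh (b j * s) ^ 2))) * s⁻¹) atTop
          (nhds (∑ i ∈ C, (0:ℝ) + ∑ j ∈ B, if j = j₀ then 4 * β j₀ else 0)) := by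
        have hfe : (fun s : ℝ => Real.exp (2*m*s)
            * (∑ i ∈ C, α i * (Real.tanh (c i * s) - 1)
              + ∑ j ∈ B, β j * (s * (1 - Real.tanh (b j * s) ^ 2))) * s⁻¹)
            = fun s : ℝ => (∑ i ∈ C, Real.exp (2*m*s) * (α i * (Real.tanh (c i * s) - 1)) * s⁻¹)
              + ∑ j ∈ B, Real.exp (2*m*s) * (β j * (s * (1 - Real.tanh (b j * s) ^ 2))) * s⁻¹ := by
          funext s
          rw [mul_add, add_mul, Finset.mul_sum, Finset.sum_mul, Finset.mul_sum, Finset.sum_mul]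
        rw [hfe]
        refine Tendsto.add (tendsto_finset_sum _ fun i hi => ?_)
          (tendsto_finset_sum _ fun j hj => ?_)
        · -- C-terms to 0
          obtain ⟨L, hL⟩ : ∃ L, Tendsto (fun s : ℝ => Real.exp (2*m*s)
              * (Real.tanh (c i * s) - 1)) atTop (nhds L) := by
            rcases eq_or_lt_of_le (hmc i hi) with h | h
            · exact ⟨-2, by rw [← h]; exact T3 hmpos⟩
            · exact ⟨0, T4 hmpos h⟩
          have := ((hL.mul tendsto_inv_atTop_zero).const_mul (α i))
          simp only [mul_zero] at this
          refine this.congr fun s => by ring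
        · -- B-terms
          by_cases hjj : j = j₀
          · subst hjj
            have hT := (T5 hmpos).const_mul (β j)
            have : Tendsto (fun s : ℝ => β j * (Real.exp (2*m*s)
                * (1 - Real.tanh (b j * s)^2))) atTop (nhds (β j * 4)) := by
              rw [hbj₀]; exact hT
            rw [mul_comm (β j) 4] at this
            rw [if_pos rfl]
            refine Tendsto.congr' ?_ this
            filter_upwards [eventually_ne_atTop (0:ℝ)] with s hs
            field_simp
          · have hbj : m < b j := by
              rcases eq_or_lt_of_le (hmb j hj) with h | h
              · exact absurd (hbinj hj hj₀ (by rw [← h, hbj₀])) hjj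
              · exact h
            have hT := (T6 (hbpos j hj) hbj).const_mul (β j)
            rw [if_neg hjj]
            have h0 : Tendsto (fun s : ℝ => β j * (Real.exp (2*m*s)
                * (1 - Real.tanh (b j * s)^2))) atTop (nhds 0) := by
              simpa using hT
            refine Tendsto.congr' ?_ h0
            filter_upwards [eventually_ne_atTop (0:ℝ)] with s hs
            field_simp
      have h0 : Tendsto (fun s : ℝ => Real.exp (2*m*s)
          * (∑ i ∈ C, α i * (Real.tanh (c i * s) - 1)
            + ∑ j ∈ B, β j * (s * (1 - Real.tanh (b j * s) ^ 2))) * s⁻¹) atTop (nhds 0) := by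
        refine tendsto_const_nhds.congr fun s => ?_
        rw [hG s, mul_zero, zero_mul]
      have huniq := tendsto_nhds_unique hlim h0
      simp only [Finset.sum_const_zero, zero_add, Finset.sum_ite_eq' B j₀, if_pos hj₀] at huniq
      linarith
    -- Step 4 : restrict B
    have hBsplit : ∀ s : ℝ, ∑ i ∈ C, α i * (Real.tanh (c i * s) - 1)
        + ∑ j ∈ B.filter (fun j => b j ≠ m), β j * (s * (1 - Real.tanh (b j * s) ^ 2)) = 0 := by
      intro s
      have h1 := Finset.sum_filter_add_sum_filter_not B (fun j => b j ≠ m)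
        (fun j => β j * (s * (1 - Real.tanh (b j * s) ^ 2)))
      have h2 : ∑ j ∈ B.filter (fun j => ¬ b j ≠ m), β j * (s * (1 - Real.tanh (b j * s) ^ 2))
          = 0 := by
        refine Finset.sum_eq_zero fun j hj => ?_
        obtain ⟨hjB, hjm⟩ := Finset.mem_filter.1 hj
        rw [hβm j hjB (not_not.1 hjm), zero_mul]
      have := hG s
      rw [← h1, h2, add_zero] at this
      exact this
    -- Step 5 : alphas at level m vanish
    have hαm : ∀ i₀ ∈ C, c i₀ = m → α i₀ = 0 := by
      intro i₀ hi₀ hci₀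
      have hlim : Tendsto (fun s : ℝ => Real.exp (2*m*s)
          * (∑ i ∈ C, α i * (Real.tanh (c i * s) - 1)
            + ∑ j ∈ B.filter (fun j => b j ≠ m), β j * (s * (1 - Real.tanh (b j * s) ^ 2))))
          atTop (nhds ((∑ i ∈ C, if i = i₀ then -2 * α i₀ else 0)
            + ∑ j ∈ B.filter (fun j => b j ≠ m), (0:ℝ))) := by
        have hfe : (fun s : ℝ => Real.exp (2*m*s)
            * (∑ i ∈ C, α i * (Real.tanh (c i * s) - 1)
              + ∑ j ∈ B.filter (fun j => b j ≠ m), β j * (s * (1 - Real.tanh (b j * s) ^ 2))))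
            = fun s : ℝ => (∑ i ∈ C, Real.exp (2*m*s) * (α i * (Real.tanh (c i * s) - 1)))
              + ∑ j ∈ B.filter (fun j => b j ≠ m),
                  Real.exp (2*m*s) * (β j * (s * (1 - Real.tanh (b j * s) ^ 2))) := by
          funext s
          rw [mul_add, Finset.mul_sum, Finset.mul_sum]
        rw [hfe]
        refine Tendsto.add (tendsto_finset_sum _ fun i hi => ?_)
          (tendsto_finset_sum _ fun j hj => ?_)
        · by_cases hii : i = i₀
          · subst hii
            rw [if_pos rfl]
            have hT := (T3 hmpos).const_mul (α i)
            have h2 : Tendsto (fun s : ℝ => α i * (Real.exp (2*m*s)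
                * (Real.tanh (c i * s) - 1))) atTop (nhds (α i * (-2))) := by
              rw [hci₀]; exact hT
            have h3 : Tendsto (fun s : ℝ => Real.exp (2*m*s)
                * (α i * (Real.tanh (c i * s) - 1))) atTop (nhds (α i * (-2))) :=
              h2.congr fun s => by ring
            have h4 : α i * (-2) = -2 * α i := by ring
            rw [h4] at h3
            exact h3
          · rw [if_neg hii]
            have hcc : m < c i := by
              rcases eq_or_lt_of_le (hmc i hi) with h | h
              · exact absurd (hcinj hi hi₀ (by rw [← h, hci₀])) hii
              · exact h
            have hT := (T4 hmpos hcc).const_mul (α i)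
            have h0 : Tendsto (fun s : ℝ => α i * (Real.exp (2*m*s)
                * (Real.tanh (c i * s) - 1))) atTop (nhds 0) := by simpa using hT
            exact h0.congr fun s => by ring
        · obtain ⟨hjB, hjm⟩ := Finset.mem_filter.1 hj
          have hbj : m < b j := lt_of_le_of_ne (hmb j hjB) (Ne.symm hjm)
          have hT := (T7 (hbpos j hjB) hbj).const_mul (β j)
          have h0 : Tendsto (fun s : ℝ => β j * (Real.exp (2*m*s)
              * (s * (1 - Real.tanh (b j * s)^2)))) atTop (nhds 0) := by simpa using hT
          exact h0.congr fun s => by ring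
      have h0 : Tendsto (fun s : ℝ => Real.exp (2*m*s)
          * (∑ i ∈ C, α i * (Real.tanh (c i * s) - 1)
            + ∑ j ∈ B.filter (fun j => b j ≠ m), β j * (s * (1 - Real.tanh (b j * s) ^ 2))))
          atTop (nhds 0) := by
        refine tendsto_const_nhds.congr fun s => ?_
        rw [hBsplit s, mul_zero]
      have huniq := tendsto_nhds_unique hlim h0
      simp only [Finset.sum_const_zero, add_zero, Finset.sum_ite_eq' C i₀, if_pos hi₀] at huniq
      linarith
    -- Step 6 : recurse
    have hCsplitsum : ∑ i ∈ C.filter (fun i => c i ≠ m), α i = 0 := by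
      have h1 := Finset.sum_filter_add_sum_filter_not C (fun i => c i ≠ m) α
      have h2 : ∑ i ∈ C.filter (fun i => ¬ c i ≠ m), α i = 0 := by
        refine Finset.sum_eq_zero fun i hi => ?_
        obtain ⟨hiC, him⟩ := Finset.mem_filter.1 hi
        exact hαm i hiC (not_not.1 him)
      rw [← hsum, ← h1, h2, add_zero]
    have hF' : ∀ s : ℝ, ∑ i ∈ C.filter (fun i => c i ≠ m), α i * Real.tanh (c i * s)
        + ∑ j ∈ B.filter (fun j => b j ≠ m), β j * (s * (1 - Real.tanh (b j * s) ^ 2)) = 0 := by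
      intro s
      have h1 : ∑ i ∈ C.filter (fun i => c i ≠ m), α i * (Real.tanh (c i * s) - 1)
          = ∑ i ∈ C, α i * (Real.tanh (c i * s) - 1) := by
        have h2 := Finset.sum_filter_add_sum_filter_not C (fun i => c i ≠ m)
          (fun i => α i * (Real.tanh (c i * s) - 1))
        have h3 : ∑ i ∈ C.filter (fun i => ¬ c i ≠ m), α i * (Real.tanh (c i * s) - 1) = 0 := by
          refine Finset.sum_eq_zero fun i hi => ?_
          obtain ⟨hiC, him⟩ := Finset.mem_filter.1 hi
          rw [hαm i hiC (not_not.1 him), zero_mul]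
        rw [← h2, h3, add_zero]
      have h4 : ∑ i ∈ C.filter (fun i => c i ≠ m), α i * Real.tanh (c i * s)
          = ∑ i ∈ C.filter (fun i => c i ≠ m), α i * (Real.tanh (c i * s) - 1)
            + ∑ i ∈ C.filter (fun i => c i ≠ m), α i := by
        rw [← Finset.sum_add_distrib]
        exact Finset.sum_congr rfl fun i _ => by ring
      rw [h4, hCsplitsum, add_zero, h1]
      exact hBsplit s
    have hlt : (C.filter (fun i => c i ≠ m)).card + (B.filter (fun j => b j ≠ m)).card < n := by
      rcases Finset.mem_union.1 hmmem with h | h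
      · obtain ⟨i, hi, him⟩ := Finset.mem_image.1 h
        have hss : C.filter (fun i => c i ≠ m) ⊂ C := by
          refine Finset.filter_ssubset.2 ⟨i, hi, not_not.2 him⟩
        calc (C.filter (fun i => c i ≠ m)).card + (B.filter (fun j => b j ≠ m)).card
            < C.card + B.card := by
              have := Finset.card_lt_card hss
              have := Finset.card_filter_le B (fun j => b j ≠ m)
              omega
          _ = n := hn
      · obtain ⟨j, hj, hjm⟩ := Finset.mem_image.1 h
        have hss : B.filter (fun j => b j ≠ m) ⊂ B := by
          refine Finset.filter_ssubset.2 ⟨j, hj, not_not.2 hjm⟩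
        calc (C.filter (fun i => c i ≠ m)).card + (B.filter (fun j => b j ≠ m)).card
            < C.card + B.card := by
              have := Finset.card_lt_card hss
              have := Finset.card_filter_le C (fun i => c i ≠ m)
              omega
          _ = n := hn
    obtain ⟨hα', hβ'⟩ := IH _ hlt (C.filter (fun i => c i ≠ m)) (B.filter (fun j => b j ≠ m))
      c b α β rfl
      (fun i hi => hc i (Finset.mem_of_mem_filter i hi))
      (fun j hj => hb j (Finset.mem_of_mem_filter j hj))
      (hcinj.mono (by intro x hx; simp only [Finset.coe_filter, Set.mem_setOf_eq] at hx; exact hx.1))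
      (hbinj.mono (by intro x hx; simp only [Finset.coe_filter, Set.mem_setOf_eq] at hx; exact hx.1))
      hF'
    constructor
    · intro i hi
      by_cases him : c i = m
      · exact hαm i hi him
      · exact hα' i (Finset.mem_filter.2 ⟨hi, him⟩)
    · intro j hj
      by_cases hjm : b j = m
      · exact hβm j hj hjm
      · exact hβ' j (Finset.mem_filter.2 ⟨hj, hjm⟩)
  · -- branch m = 0
    have hmz : m = 0 := le_antisymm (not_lt.1 hmpos) hm0
    obtain ⟨j₀, hj₀, hbj₀⟩ : ∃ j₀ ∈ B, b j₀ = 0 := by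
      rcases Finset.mem_union.1 hmmem with h | h
      · obtain ⟨i, hi, him⟩ := Finset.mem_image.1 h
        exact absurd (hmz ▸ him) (hc i hi).ne'
      · obtain ⟨j, hj, hjm⟩ := Finset.mem_image.1 h
        exact ⟨j, hj, by rw [hjm, hmz]⟩
    have hβ0 : β j₀ = 0 := by
      have hlim : Tendsto (fun s : ℝ => (∑ i ∈ C, α i * Real.tanh (c i * s)
          + ∑ j ∈ B, β j * (s * (1 - Real.tanh (b j * s) ^ 2))) * s⁻¹) atTop
          (nhds (∑ i ∈ C, (0:ℝ) + ∑ j ∈ B, if j = j₀ then β j₀ else 0)) := by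
        have hfe : (fun s : ℝ => (∑ i ∈ C, α i * Real.tanh (c i * s)
            + ∑ j ∈ B, β j * (s * (1 - Real.tanh (b j * s) ^ 2))) * s⁻¹)
            = fun s : ℝ => (∑ i ∈ C, (α i * Real.tanh (c i * s)) * s⁻¹)
              + ∑ j ∈ B, (β j * (s * (1 - Real.tanh (b j * s) ^ 2))) * s⁻¹ := by
          funext s
          rw [add_mul, Finset.sum_mul, Finset.sum_mul]
        rw [hfe]
        refine Tendsto.add (tendsto_finset_sum _ fun i hi => ?_)
          (tendsto_finset_sum _ fun j hj => ?_)
        · have := ((T1 (hc i hi)).const_mul (α i)).mul tendsto_inv_atTop_zero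
          simpa using this
        · by_cases hjj : j = j₀
          · subst hjj
            rw [if_pos rfl]
            refine Tendsto.congr' ?_ (tendsto_const_nhds (x := β j))
            filter_upwards [eventually_ne_atTop (0:ℝ)] with s hs
            rw [hbj₀]
            simp [Real.tanh_zero]
            field_simp
          · have hbj : 0 < b j := by
              rcases eq_or_lt_of_le (hb j hj) with h | h
              · exact absurd (hbinj hj hj₀ (by rw [← h, hbj₀])) hjj
              · exact h
            rw [if_neg hjj]
            have h0 := (T8 hbj).const_mul (β j)
            rw [mul_zero] at h0
            refine Tendsto.congr' ?_ h0
            filter_upwards [eventually_ne_atTop (0:ℝ)] with s hs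
            field_simp
      have h0 : Tendsto (fun s : ℝ => (∑ i ∈ C, α i * Real.tanh (c i * s)
          + ∑ j ∈ B, β j * (s * (1 - Real.tanh (b j * s) ^ 2))) * s⁻¹) atTop (nhds 0) := by
        refine tendsto_const_nhds.congr fun s => ?_
        rw [heq s, zero_mul]
      have huniq := tendsto_nhds_unique hlim h0
      simp only [Finset.sum_const_zero, zero_add, Finset.sum_ite_eq' B j₀, if_pos hj₀] at huniq
      exact huniq
    have hF' : ∀ s : ℝ, ∑ i ∈ C, α i * Real.tanh (c i * s)
        + ∑ j ∈ B.erase j₀, β j * (s * (1 - Real.tanh (b j * s) ^ 2)) = 0 := by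
      intro s
      have h1 := Finset.sum_erase_add B
        (fun j => β j * (s * (1 - Real.tanh (b j * s) ^ 2))) hj₀
      have := heq s
      rw [← h1] at this
      simp only [hβ0, zero_mul, add_zero] at this
      exact this
    have hlt : C.card + (B.erase j₀).card < n := by
      have := Finset.card_erase_of_mem hj₀
      have hBpos : 0 < B.card := Finset.card_pos.2 ⟨j₀, hj₀⟩
      omega
    obtain ⟨hα', hβ'⟩ := IH _ hlt C (B.erase j₀) c b α β rfl hc
      (fun j hj => hb j (Finset.mem_of_mem_erase hj))
      hcinj
      (hbinj.mono (Finset.coe_subset.2 (Finset.erase_subset j₀ B)))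
      hF'
    refine ⟨hα', fun j hj => ?_⟩
    by_cases hjj : j = j₀
    · rw [hjj]; exact hβ0
    · exact hβ' j (Finset.mem_erase.2 ⟨hjj, hj⟩)


lemma avoid_hyperplanes {d : ℕ} (K : Finset (Fin d → ℝ)) :
    ∃ z : Fin d → ℝ, ∀ k ∈ K, k ≠ 0 → ∑ t, k t * z t ≠ 0 := by
  classical
  -- associate to each k the polynomial ∑ t, k t • X^(t+1)
  set p : (Fin d → ℝ) → Polynomial ℝ := fun k => ∑ t : Fin d, C (k t) * X ^ ((t : ℕ) + 1) with hp
  have hpne : ∀ k : Fin d → ℝ, k ≠ 0 → p k ≠ 0 := by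
    intro k hk
    obtain ⟨t₀, ht₀⟩ : ∃ t, k t ≠ 0 := by
      by_contra h
      push_neg at h
      exact hk (funext fun t => h t)
    intro hzero
    have hcoeff : (p k).coeff ((t₀ : ℕ) + 1) = k t₀ := by
      rw [hp]
      rw [Polynomial.finset_sum_coeff]
      rw [Finset.sum_eq_single t₀]
      · simp [Polynomial.coeff_C_mul, Polynomial.coeff_X_pow]
      · intro t _ htne
        simp only [Polynomial.coeff_C_mul, Polynomial.coeff_X_pow]
        rw [if_neg, mul_zero]
        intro h
        exact htne (Fin.ext (by omega))
      · intro h; exact absurd (Finset.mem_univ t₀) h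
    rw [hzero] at hcoeff
    simp at hcoeff
    exact ht₀ hcoeff.symm
  have hfin : (⋃ k ∈ K.filter (fun k => k ≠ 0), {x : ℝ | (p k).IsRoot x}).Finite := by
    refine Set.Finite.biUnion (Finset.finite_toSet _) fun k hk => ?_
    have hk' := (Finset.mem_filter.1 hk).2
    exact Polynomial.finite_setOf_isRoot (hpne k hk')
  obtain ⟨ε, hε⟩ := (Set.Infinite.nonempty (Set.Finite.infinite_compl hfin))
  refine ⟨fun t => ε ^ ((t : ℕ) + 1), fun k hk hkne => ?_⟩
  have hnr : ¬ (p k).IsRoot ε := by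
    intro hroot
    exact hε (Set.mem_iUnion₂.2 ⟨k, Finset.mem_filter.2 ⟨hk, hkne⟩, hroot⟩)
  intro hzero
  apply hnr
  unfold Polynomial.IsRoot
  rw [hp]
  rw [Polynomial.eval_finset_sum]
  simpa using hzero

lemma pi_neg_ne_self {d : ℕ} {v : Fin d → ℝ} (hv : v ≠ 0) : -v ≠ v := by
  intro h
  apply hv
  funext t
  have := congrFun h t
  simp only [Pi.neg_apply] at this
  have : v t = 0 := by linarith
  simpa using this

lemma signRep {d : ℕ} : ∀ (n : ℕ) (P : Finset (Fin d → ℝ)), P.card = n →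
    (0 : Fin d → ℝ) ∉ P → (∀ v ∈ P, -v ∈ P) →
    ∃ V : Finset (Fin d → ℝ), V ⊆ P ∧ (∀ v ∈ V, -v ∉ V) ∧ (∀ v ∈ P, v ∈ V ∨ -v ∈ V) ∧
      P.card = 2 * V.card := by
  intro n
  induction n using Nat.strong_induction_on with
  | _ n IH =>
  intro P hcard h0 hsym
  rcases Finset.eq_empty_or_nonempty P with hP | hP
  · exact ⟨∅, by simp [hP]⟩
  obtain ⟨v₀, hv₀⟩ := hP
  have hv₀ne : v₀ ≠ 0 := fun h => h0 (h ▸ hv₀)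
  have hnegv₀ : -v₀ ∈ P := hsym v₀ hv₀
  have hne : -v₀ ≠ v₀ := pi_neg_ne_self hv₀ne
  set P' := (P.erase v₀).erase (-v₀) with hP'
  have hmem1 : -v₀ ∈ P.erase v₀ := Finset.mem_erase.2 ⟨hne, hnegv₀⟩
  have hcard' : P'.card = n - 2 := by
    rw [hP', Finset.card_erase_of_mem hmem1, Finset.card_erase_of_mem hv₀, hcard]
    omega
  have hcardP : 2 ≤ n := by
    have h1 : 0 < (P.erase v₀).card := Finset.card_pos.2 ⟨-v₀, hmem1⟩
    have h2 := Finset.card_erase_of_mem hv₀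
    omega
  have hsub' : P' ⊆ P := (Finset.erase_subset _ _).trans (Finset.erase_subset _ _)
  obtain ⟨V', hV'sub, hV'anti, hV'cov, hV'card⟩ := IH (n - 2) (by omega) P' hcard'
    (fun h => h0 (hsub' h))
    (by
      intro u hu
      obtain ⟨hu1, hu2⟩ := Finset.mem_erase.1 hu
      obtain ⟨hu3, hu4⟩ := Finset.mem_erase.1 hu2
      refine Finset.mem_erase.2 ⟨?_, Finset.mem_erase.2 ⟨?_, hsym u hu4⟩⟩
      · intro h; exact hu3 (neg_injective h)
      · intro h; exact hu1 (by rw [← neg_neg u, h]))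
  refine ⟨insert v₀ V', ?_, ?_, ?_, ?_⟩
  · intro v hv
    rcases Finset.mem_insert.1 hv with h | h
    · rw [h]; exact hv₀
    · exact hsub' (hV'sub h)
  · intro v hv
    rcases Finset.mem_insert.1 hv with h | h
    · subst h
      intro hcon
      rcases Finset.mem_insert.1 hcon with h2 | h2
      · exact hne h2
      · have := hV'sub h2
        rw [hP'] at this
        exact (Finset.mem_erase.1 this).1 rfl
    · intro hcon
      rcases Finset.mem_insert.1 hcon with h2 | h2
      · have := hV'sub h
        rw [hP'] at this
        have h3 := (Finset.mem_erase.1 this).1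
        exact h3 (by rw [← neg_neg v, h2])
      · exact hV'anti v h h2
  · intro v hv
    by_cases h1 : v = v₀
    · left; rw [h1]; exact Finset.mem_insert_self _ _
    · by_cases h2 : v = -v₀
      · right
        have hv : -v = v₀ := by rw [h2, neg_neg]
        rw [hv]; exact Finset.mem_insert_self _ _
      · have : v ∈ P' := Finset.mem_erase.2 ⟨h2, Finset.mem_erase.2 ⟨h1, hv⟩⟩
        rcases hV'cov v this with h | h
        · left; exact Finset.mem_insert_of_mem h
        · right; exact Finset.mem_insert_of_mem h
  · have hv₀notV' : v₀ ∉ V' := by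
      intro h
      have := hV'sub h
      rw [hP'] at this
      exact (Finset.mem_erase.1 (Finset.mem_erase.1 this).2).1 rfl
    rw [Finset.card_insert_of_notMem hv₀notV', hcard]
    omega

lemma tanh_sign_abs (r s : ℝ) :
    Real.tanh (r * s) = (if 0 ≤ r then (1:ℝ) else -1) * Real.tanh (|r| * s) := by
  by_cases h : 0 ≤ r
  · rw [if_pos h, abs_of_nonneg h, one_mul]
  · rw [if_neg h, abs_of_neg (lt_of_not_ge h),
      show -r * s = -(r*s) from by ring, Real.tanh_neg]; ring

lemma tanh_sq_abs (r s : ℝ) : Real.tanh (|r| * s) ^ 2 = Real.tanh (r * s) ^ 2 := by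
  by_cases h : 0 ≤ r
  · rw [abs_of_nonneg h]
  · rw [abs_of_neg (lt_of_not_ge h), show -r * s = -(r*s) from by ring, Real.tanh_neg]; ring

theorem indepTanh {d : ℕ} (V U : Finset (Fin d → ℝ))
    (hV0 : ∀ v ∈ V, v ≠ 0)
    (hVanti : ∀ v ∈ V, -v ∉ V)
    (hUanti : ∀ u ∈ U, ∀ u' ∈ U, u ≠ u' → u ≠ -u') :
    LinearIndependent ℝ (Sum.elim
      (fun v : ↥V => fun x : Fin d → ℝ => Real.tanh (∑ t, (v : Fin d → ℝ) t * x t))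
      (fun q : (↥U × Fin d) => fun x : Fin d → ℝ =>
        x q.2 * deriv Real.tanh (∑ t, (q.1 : Fin d → ℝ) t * x t))) := by
  classical
  rw [Fintype.linearIndependent_iff]
  intro g hg
  set G : (Fin d → ℝ) → ℝ := fun v => if h : v ∈ V then g (Sum.inl ⟨v, h⟩) else 0 with hGdef
  set γ : (Fin d → ℝ) → Fin d → ℝ :=
    fun u t => if h : u ∈ U then g (Sum.inr (⟨u, h⟩, t)) else 0 with hγdef
  have hGval : ∀ v : ↥V, g (Sum.inl v) = G ↑v := by
    intro v; rw [hGdef]; simp only [dif_pos v.2]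
  have hγval : ∀ (u : ↥U) (t : Fin d), g (Sum.inr (u, t)) = γ ↑u t := by
    intro u t; rw [hγdef]; simp only [dif_pos u.2]
  -- pointwise equation
  have hgx : ∀ x : Fin d → ℝ, ∑ v ∈ V, G v * Real.tanh (∑ t, v t * x t)
      + ∑ u ∈ U, (∑ t, γ u t * (x t * deriv Real.tanh (∑ r, u r * x r))) = 0 := by
    intro x
    have h0 := congrFun hg x
    simp only [Finset.sum_apply, Pi.smul_apply, smul_eq_mul, Pi.zero_apply,
      Fintype.sum_sum_type, Fintype.sum_prod_type, Sum.elim_inl, Sum.elim_inr] at h0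
    rw [← h0]
    congr 1
    · rw [Finset.univ_eq_attach, ← Finset.sum_attach V
        (fun v => G v * Real.tanh (∑ t, v t * x t))]
      exact Finset.sum_congr rfl fun v _ => by rw [hGval v]
    · rw [Finset.univ_eq_attach, ← Finset.sum_attach U
        (fun u => ∑ t, γ u t * (x t * deriv Real.tanh (∑ r, u r * x r)))]
      exact Finset.sum_congr rfl fun u _ => Finset.sum_congr rfl fun t _ => by rw [hγval u t]
  -- restriction to a line
  have key : ∀ z : Fin d → ℝ, (∀ v ∈ V, ∑ t, v t * z t ≠ 0) →
      Set.InjOn (fun v : Fin d → ℝ => |∑ t, v t * z t|) (V : Set (Fin d → ℝ)) →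
      Set.InjOn (fun u : Fin d → ℝ => |∑ t, u t * z t|) (U : Set (Fin d → ℝ)) →
      (∀ v ∈ V, G v = 0) ∧ (∀ u ∈ U, ∑ t, γ u t * z t = 0) := by
    intro z hz1 hz2 hz3
    have hline : ∀ s : ℝ,
        ∑ v ∈ V, (G v * (if 0 ≤ ∑ t, v t * z t then (1:ℝ) else -1))
          * Real.tanh (|∑ t, v t * z t| * s)
        + ∑ u ∈ U, (∑ t, γ u t * z t)
          * (s * (1 - Real.tanh (|∑ t, u t * z t| * s) ^ 2)) = 0 := by
      intro s
      have hx := hgx (fun t => s * z t)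
      have h1 : ∑ v ∈ V, (G v * (if 0 ≤ ∑ t, v t * z t then (1:ℝ) else -1))
          * Real.tanh (|∑ t, v t * z t| * s)
          = ∑ v ∈ V, G v * Real.tanh (∑ t, v t * (s * z t)) := by
        refine Finset.sum_congr rfl fun v hv => ?_
        have harg : ∑ t, v t * (s * z t) = (∑ t, v t * z t) * s := by
          rw [Finset.sum_mul]; exact Finset.sum_congr rfl fun t _ => by ring
        rw [harg, tanh_sign_abs (∑ t, v t * z t) s]
        ring
      have h2 : ∑ u ∈ U, (∑ t, γ u t * z t)
          * (s * (1 - Real.tanh (|∑ t, u t * z t| * s) ^ 2))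
          = ∑ u ∈ U, ∑ t, γ u t * ((s * z t) * deriv Real.tanh (∑ r, u r * (s * z r))) := by
        refine Finset.sum_congr rfl fun u hu => ?_
        have harg : ∑ r, u r * (s * z r) = (∑ r, u r * z r) * s := by
          rw [Finset.sum_mul]; exact Finset.sum_congr rfl fun r _ => by ring
        rw [Finset.sum_mul]
        refine Finset.sum_congr rfl fun t _ => ?_
        rw [harg, deriv_tanh, tanh_sq_abs (∑ r, u r * z r) s]
        ring
      rw [h1, h2]
      have hx' : ∑ v ∈ V, G v * Real.tanh (∑ t, v t * (s * z t))
          + ∑ u ∈ U, ∑ t, γ u t * ((s * z t) * deriv Real.tanh (∑ r, u r * (s * z r))) = 0 := by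
        exact hx
      exact hx'
    obtain ⟨hα, hβ⟩ := oneD (Fin d → ℝ) (Fin d → ℝ) (V.card + U.card) V U
      (fun v => |∑ t, v t * z t|) (fun u => |∑ t, u t * z t|)
      (fun v => G v * (if 0 ≤ ∑ t, v t * z t then (1:ℝ) else -1))
      (fun u => ∑ t, γ u t * z t) rfl
      (fun v hv => abs_pos.2 (hz1 v hv)) (fun u _ => abs_nonneg _) hz2 hz3 hline
    constructor
    · intro v hv
      have h := hα v hv
      by_cases hsgn : 0 ≤ ∑ t, v t * z t
      · rw [if_pos hsgn, mul_one] at h; exact h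
      · rw [if_neg hsgn] at h
        have : G v = 0 := by linarith [h]
        exact this
    · exact hβ
  -- existence of generic z
  have exz : ∀ w₀ : Fin d → ℝ, w₀ ≠ 0 → ∃ z : Fin d → ℝ,
      (∀ v ∈ V, ∑ t, v t * z t ≠ 0) ∧
      Set.InjOn (fun v : Fin d → ℝ => |∑ t, v t * z t|) (V : Set (Fin d → ℝ)) ∧
      Set.InjOn (fun u : Fin d → ℝ => |∑ t, u t * z t|) (U : Set (Fin d → ℝ)) ∧
      ∑ t, w₀ t * z t ≠ 0 := by
    intro w₀ hw₀
    set K : Finset (Fin d → ℝ) := V ∪ ((V ∪ U).biUnion fun p => (V ∪ U).image fun q => p - q)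
      ∪ ((V ∪ U).biUnion fun p => (V ∪ U).image fun q => p + q) ∪ {w₀} with hKdef
    obtain ⟨z, hzK⟩ := avoid_hyperplanes K
    have hdot_sub : ∀ p q : Fin d → ℝ, ∑ t, (p - q) t * z t = ∑ t, p t * z t - ∑ t, q t * z t := by
      intro p q
      rw [← Finset.sum_sub_distrib]
      exact Finset.sum_congr rfl fun t _ => by simp [sub_mul]
    have hdot_add : ∀ p q : Fin d → ℝ, ∑ t, (p + q) t * z t = ∑ t, p t * z t + ∑ t, q t * z t := by
      intro p q
      rw [← Finset.sum_add_distrib]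
      exact Finset.sum_congr rfl fun t _ => by simp [add_mul]
    have hinj : ∀ (W : Finset (Fin d → ℝ)), W ⊆ V ∪ U →
        (∀ p ∈ W, ∀ q ∈ W, p ≠ q → p ≠ -q) →
        Set.InjOn (fun v : Fin d → ℝ => |∑ t, v t * z t|) (W : Set (Fin d → ℝ)) := by
      intro W hWsub hWanti p hp q hq habs
      simp only [Finset.mem_coe] at hp hq
      by_contra hne
      rcases abs_eq_abs.1 habs with h | h
      · have hdz : ∑ t, (p - q) t * z t = 0 := by rw [hdot_sub]; linarith
        have hmem : p - q ∈ K := by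
          rw [hKdef]
          refine Finset.mem_union_left _ (Finset.mem_union_left _ (Finset.mem_union_right _ ?_))
          exact Finset.mem_biUnion.2 ⟨p, hWsub hp, Finset.mem_image_of_mem _ (hWsub hq)⟩
        exact hzK _ hmem (sub_ne_zero.2 hne) hdz
      · have hdz : ∑ t, (p + q) t * z t = 0 := by rw [hdot_add]; linarith
        have hpq : p + q ≠ 0 := by
          intro hc
          have : p = -q := by
            funext t
            have := congrFun hc t
            simp only [Pi.add_apply, Pi.zero_apply, Pi.neg_apply] at this ⊢
            linarith
          exact hWanti p hp q hq hne this
        have hmem : p + q ∈ K := by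
          rw [hKdef]
          refine Finset.mem_union_left _ (Finset.mem_union_right _ ?_)
          exact Finset.mem_biUnion.2 ⟨p, hWsub hp, Finset.mem_image_of_mem _ (hWsub hq)⟩
        exact hzK _ hmem hpq hdz
    refine ⟨z, ?_, ?_, ?_, ?_⟩
    · intro v hv
      refine hzK v ?_ (hV0 v hv)
      rw [hKdef]
      exact Finset.mem_union_left _ (Finset.mem_union_left _ (Finset.mem_union_left _ hv))
    · refine hinj V Finset.subset_union_left ?_
      intro p hp q hq hne hc
      exact hVanti q hq (hc ▸ hp)
    · exact hinj U Finset.subset_union_right hUanti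
    · refine hzK w₀ ?_ hw₀
      rw [hKdef]
      exact Finset.mem_union_right _ (Finset.mem_singleton_self w₀)
  intro i
  match i with
  | Sum.inl v =>
      obtain ⟨z, hz1, hz2, hz3, _⟩ := exz v.1 (hV0 v.1 v.2)
      rw [hGval v]
      exact (key z hz1 hz2 hz3).1 v.1 v.2
  | Sum.inr (u, t) =>
      rw [hγval u t]
      by_contra hne
      have hγu : (γ ↑u) ≠ 0 := fun h => hne (by rw [h]; rfl)
      obtain ⟨z, hz1, hz2, hz3, hz4⟩ := exz (γ ↑u) hγu
      exact hz4 ((key z hz1 hz2 hz3).2 u.1 u.2)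



/-- model-rank count for two-layer tanh networks at a general parameter
point: the span of the neuron functions `tanh(wᵢᵀx)` and the scaled derivative functions
`aᵢ tanh'(wᵢᵀx) x_t` has dimension `m_w + m_a * d`, where `m_w` counts nonzero weights up
to sign and `m_a` counts effective neurons (nonzero weight with nonzero output weight, up
to sign, plus one block for zero-weight neurons with nonzero output weight). -/
theorem two_layer_tanh_rank_count {d m : ℕ}
    (w : Fin m → Fin d → ℝ) (a : Fin m → ℝ) :
    Module.finrank ℝ (Submodule.span ℝ (Set.range
      (Sum.elim
        (fun i : Fin m => fun x : Fin d → ℝ => Real.tanh (∑ t, w i t * x t))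
        (fun p : Fin m × Fin d => fun x : Fin d → ℝ =>
          a p.1 * deriv Real.tanh (∑ t, w p.1 t * x t) * x p.2)))) =
    Set.ncard {v : Fin d → ℝ | ∃ i, w i ≠ 0 ∧ (v = w i ∨ v = -w i)} / 2 +
    (Set.ncard {v : Fin d → ℝ | ∃ i, w i ≠ 0 ∧ a i ≠ 0 ∧ (v = w i ∨ v = -w i)} / 2 +
      Set.ncard {v : Fin d → ℝ | ∃ i, w i = 0 ∧ a i ≠ 0 ∧ v = w i}) * d := by

  classical
  -- Finset versions of the three sets
  set Pfin : Finset (Fin d → ℝ) :=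
    ((Finset.univ.filter (fun i => w i ≠ 0)).image w)
      ∪ ((Finset.univ.filter (fun i => w i ≠ 0)).image (fun i => -w i)) with hPdef
  set Qfin : Finset (Fin d → ℝ) :=
    ((Finset.univ.filter (fun i => w i ≠ 0 ∧ a i ≠ 0)).image w)
      ∪ ((Finset.univ.filter (fun i => w i ≠ 0 ∧ a i ≠ 0)).image (fun i => -w i)) with hQdef
  set Zfin : Finset (Fin d → ℝ) :=
    if ∃ i, w i = 0 ∧ a i ≠ 0 then {0} else ∅ with hZdef
  have hPcoe : (Pfin : Set (Fin d → ℝ)) = {v : Fin d → ℝ | ∃ i, w i ≠ 0 ∧ (v = w i ∨ v = -w i)} := by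
    ext v
    simp only [hPdef, Finset.coe_union, Set.mem_union, Finset.coe_image, Set.mem_image,
      Finset.coe_filter, Set.mem_setOf_eq, Finset.mem_univ, true_and]
    constructor
    · rintro (⟨i, hi, rfl⟩ | ⟨i, hi, rfl⟩)
      · exact ⟨i, hi, Or.inl rfl⟩
      · exact ⟨i, hi, Or.inr rfl⟩
    · rintro ⟨i, hi, (rfl | rfl)⟩
      · exact Or.inl ⟨i, hi, rfl⟩
      · exact Or.inr ⟨i, hi, rfl⟩
  have hQcoe : (Qfin : Set (Fin d → ℝ))
      = {v : Fin d → ℝ | ∃ i, w i ≠ 0 ∧ a i ≠ 0 ∧ (v = w i ∨ v = -w i)} := by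
    ext v
    simp only [hQdef, Finset.coe_union, Set.mem_union, Finset.coe_image, Set.mem_image,
      Finset.coe_filter, Set.mem_setOf_eq, Finset.mem_univ, true_and]
    constructor
    · rintro (⟨i, hi, rfl⟩ | ⟨i, hi, rfl⟩)
      · exact ⟨i, hi.1, hi.2, Or.inl rfl⟩
      · exact ⟨i, hi.1, hi.2, Or.inr rfl⟩
    · rintro ⟨i, hi1, hi2, (rfl | rfl)⟩
      · exact Or.inl ⟨i, ⟨hi1, hi2⟩, rfl⟩
      · exact Or.inr ⟨i, ⟨hi1, hi2⟩, rfl⟩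
  have hZcoe : (Zfin : Set (Fin d → ℝ))
      = {v : Fin d → ℝ | ∃ i, w i = 0 ∧ a i ≠ 0 ∧ v = w i} := by
    ext v
    rw [hZdef]
    by_cases h : ∃ i, w i = 0 ∧ a i ≠ 0
    · rw [if_pos h]
      obtain ⟨i₀, hw₀, ha₀⟩ := h
      simp only [Finset.coe_singleton, Set.mem_singleton_iff, Set.mem_setOf_eq]
      constructor
      · rintro rfl; exact ⟨i₀, hw₀, ha₀, hw₀.symm⟩
      · rintro ⟨i, hwi, hai, rfl⟩; exact hwi
    · rw [if_neg h]
      simp only [Finset.coe_empty, Set.mem_empty_iff_false, Set.mem_setOf_eq, false_iff]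
      rintro ⟨i, hwi, hai, rfl⟩
      exact h ⟨i, hwi, hai⟩
  -- basic properties of Pfin
  have hP0 : (0 : Fin d → ℝ) ∉ Pfin := by
    intro h
    have : (0 : Fin d → ℝ) ∈ (Pfin : Set (Fin d → ℝ)) := h
    rw [hPcoe] at this
    obtain ⟨i, hi, (h0 | h0)⟩ := this
    · exact hi h0.symm
    · exact hi (by rw [← neg_neg (w i), ← h0]; simp)
  have hPsym : ∀ v ∈ Pfin, -v ∈ Pfin := by
    intro v hv
    have : v ∈ (Pfin : Set (Fin d → ℝ)) := hv
    rw [hPcoe] at this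
    obtain ⟨i, hi, (rfl | rfl)⟩ := this
    · have : -w i ∈ (Pfin : Set (Fin d → ℝ)) := by rw [hPcoe]; exact ⟨i, hi, Or.inr rfl⟩
      exact this
    · have : w i ∈ (Pfin : Set (Fin d → ℝ)) := by rw [hPcoe]; exact ⟨i, hi, Or.inl rfl⟩
      simpa using this
  have hQsym : ∀ v ∈ Qfin, -v ∈ Qfin := by
    intro v hv
    have : v ∈ (Qfin : Set (Fin d → ℝ)) := hv
    rw [hQcoe] at this
    obtain ⟨i, hi1, hi2, (rfl | rfl)⟩ := this
    · have : -w i ∈ (Qfin : Set (Fin d → ℝ)) := by rw [hQcoe]; exact ⟨i, hi1, hi2, Or.inr rfl⟩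
      exact this
    · have : w i ∈ (Qfin : Set (Fin d → ℝ)) := by rw [hQcoe]; exact ⟨i, hi1, hi2, Or.inl rfl⟩
      simpa using this
  have hQP : Qfin ⊆ Pfin := by
    intro v hv
    have : v ∈ (Qfin : Set (Fin d → ℝ)) := hv
    rw [hQcoe] at this
    obtain ⟨i, hi1, hi2, hor⟩ := this
    have : v ∈ (Pfin : Set (Fin d → ℝ)) := by rw [hPcoe]; exact ⟨i, hi1, hor⟩
    exact this
  -- choose sign representatives
  obtain ⟨V, hVsub, hVanti, hVcov, hVcard⟩ := signRep Pfin.card Pfin rfl hP0 hPsym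
  set VQ : Finset (Fin d → ℝ) := V.filter (fun v => v ∈ Qfin) with hVQdef
  set U : Finset (Fin d → ℝ) := VQ ∪ Zfin with hUdef
  have hV0 : ∀ v ∈ V, v ≠ 0 := fun v hv h => hP0 (h ▸ hVsub hv)
  have hZsub0 : ∀ u ∈ Zfin, u = 0 := by
    intro u hu
    rw [hZdef] at hu
    by_cases h : ∃ i, w i = 0 ∧ a i ≠ 0
    · rw [if_pos h] at hu; exact Finset.mem_singleton.1 hu
    · rw [if_neg h] at hu; exact absurd hu (Finset.notMem_empty u)
  have hVQV : VQ ⊆ V := Finset.filter_subset _ _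
  have hUanti : ∀ u ∈ U, ∀ u' ∈ U, u ≠ u' → u ≠ -u' := by
    intro u hu u' hu' hne hc
    rcases Finset.mem_union.1 hu with h1 | h1 <;> rcases Finset.mem_union.1 hu' with h2 | h2
    · exact hVanti u' (hVQV h2) (by rw [← hc]; exact hVQV h1)
    · rw [hZsub0 u' h2] at hc
      simp only [neg_zero] at hc
      exact hV0 u (hVQV h1) hc
    · rw [hZsub0 u h1] at hc
      have : u' = 0 := by rw [← neg_neg u', ← hc, neg_zero]
      exact hV0 u' (hVQV h2) this
    · exact hne (by rw [hZsub0 u h1, hZsub0 u' h2])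
  -- the clean family
  have hsum_neg : ∀ (v : Fin d → ℝ) (x : Fin d → ℝ),
      ∑ t, (-v) t * x t = -∑ t, v t * x t := by
    intro v x
    rw [← Finset.sum_neg_distrib]
    exact Finset.sum_congr rfl fun t _ => by simp [neg_mul]
  have hDeven : ∀ y : ℝ, deriv Real.tanh (-y) = deriv Real.tanh y := by
    intro y; rw [deriv_tanh, deriv_tanh, Real.tanh_neg]; ring
  have hindep := indepTanh V U hV0 hVanti hUanti
  have hspan : Submodule.span ℝ (Set.range
      (Sum.elim
        (fun i : Fin m => fun x : Fin d → ℝ => Real.tanh (∑ t, w i t * x t))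
        (fun p : Fin m × Fin d => fun x : Fin d → ℝ =>
          a p.1 * deriv Real.tanh (∑ t, w p.1 t * x t) * x p.2)))
      = Submodule.span ℝ (Set.range (Sum.elim
        (fun v : ↥V => fun x : Fin d → ℝ => Real.tanh (∑ t, (v : Fin d → ℝ) t * x t))
        (fun q : (↥U × Fin d) => fun x : Fin d → ℝ =>
          x q.2 * deriv Real.tanh (∑ t, (q.1 : Fin d → ℝ) t * x t)))) := by
    apply le_antisymm <;> rw [Submodule.span_le] <;> rintro φ ⟨p, rfl⟩
    · rcases p with i | ⟨i, t⟩
      · rw [Sum.elim_inl]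
        by_cases hwi : w i = 0
        · have hzero : (fun x : Fin d → ℝ => Real.tanh (∑ t, w i t * x t))
              = (0 : (Fin d → ℝ) → ℝ) := by
            funext x; simp [hwi]
          rw [hzero]
          exact Submodule.zero_mem _
        · have hwP : w i ∈ Pfin := by
            have : w i ∈ (Pfin : Set (Fin d → ℝ)) := by
              rw [hPcoe]; exact ⟨i, hwi, Or.inl rfl⟩
            exact this
          rcases hVcov (w i) hwP with hV | hV
          · exact Submodule.subset_span ⟨Sum.inl ⟨w i, hV⟩, rfl⟩
          · have hkey : (fun x : Fin d → ℝ => Real.tanh (∑ t, w i t * x t))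
                = (-1 : ℝ) • (Sum.elim
                  (fun v : ↥V => fun x : Fin d → ℝ => Real.tanh (∑ t, (v : Fin d → ℝ) t * x t))
                  (fun q : (↥U × Fin d) => fun x : Fin d → ℝ =>
                    x q.2 * deriv Real.tanh (∑ t, (q.1 : Fin d → ℝ) t * x t))
                  (Sum.inl ⟨-w i, hV⟩)) := by
              funext x
              show Real.tanh (∑ t, w i t * x t) = -1 * Real.tanh (∑ t, (-w i) t * x t)
              rw [hsum_neg, Real.tanh_neg]; ring
            rw [hkey]
            exact Submodule.smul_mem _ _ (Submodule.subset_span ⟨Sum.inl ⟨-w i, hV⟩, rfl⟩)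
      · rw [Sum.elim_inr]
        by_cases hai : a i = 0
        · have hzero : (fun x : Fin d → ℝ =>
              a i * deriv Real.tanh (∑ t, w i t * x t) * x t) = (0 : (Fin d → ℝ) → ℝ) := by
            funext x; simp [hai]
          rw [hzero]
          exact Submodule.zero_mem _
        by_cases hwi : w i = 0
        · have hZ : (0 : Fin d → ℝ) ∈ Zfin := by
            rw [hZdef, if_pos ⟨i, hwi, hai⟩]; exact Finset.mem_singleton_self _
          have hU0 : (0 : Fin d → ℝ) ∈ U := Finset.mem_union_right _ hZ
          have hkey : (fun x : Fin d → ℝ =>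
              a i * deriv Real.tanh (∑ r, w i r * x r) * x t)
              = (a i) • (Sum.elim
                  (fun v : ↥V => fun x : Fin d → ℝ => Real.tanh (∑ t, (v : Fin d → ℝ) t * x t))
                  (fun q : (↥U × Fin d) => fun x : Fin d → ℝ =>
                    x q.2 * deriv Real.tanh (∑ t, (q.1 : Fin d → ℝ) t * x t))
                  (Sum.inr (⟨0, hU0⟩, t))) := by
            funext x
            show a i * deriv Real.tanh (∑ r, w i r * x r) * x t
              = a i * (x t * deriv Real.tanh (∑ r, (0 : Fin d → ℝ) r * x r))
            rw [hwi]; ring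
          rw [hkey]
          exact Submodule.smul_mem _ _ (Submodule.subset_span ⟨Sum.inr (⟨0, hU0⟩, t), rfl⟩)
        · have hwQ : w i ∈ Qfin := by
            have : w i ∈ (Qfin : Set (Fin d → ℝ)) := by
              rw [hQcoe]; exact ⟨i, hwi, hai, Or.inl rfl⟩
            exact this
          rcases hVcov (w i) (hQP hwQ) with hV | hV
          · have hU1 : w i ∈ U :=
              Finset.mem_union_left _ (Finset.mem_filter.2 ⟨hV, hwQ⟩)
            have hkey : (fun x : Fin d → ℝ =>
                a i * deriv Real.tanh (∑ r, w i r * x r) * x t)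
                = (a i) • (Sum.elim
                    (fun v : ↥V => fun x : Fin d → ℝ => Real.tanh (∑ t, (v : Fin d → ℝ) t * x t))
                    (fun q : (↥U × Fin d) => fun x : Fin d → ℝ =>
                      x q.2 * deriv Real.tanh (∑ t, (q.1 : Fin d → ℝ) t * x t))
                    (Sum.inr (⟨w i, hU1⟩, t))) := by
              funext x
              show a i * deriv Real.tanh (∑ r, w i r * x r) * x t
                = a i * (x t * deriv Real.tanh (∑ r, w i r * x r))
              ring
            rw [hkey]
            exact Submodule.smul_mem _ _ (Submodule.subset_span ⟨Sum.inr (⟨w i, hU1⟩, t), rfl⟩)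
          · have hnwQ : -w i ∈ Qfin := hQsym _ hwQ
            have hU1 : -w i ∈ U :=
              Finset.mem_union_left _ (Finset.mem_filter.2 ⟨hV, hnwQ⟩)
            have hkey : (fun x : Fin d → ℝ =>
                a i * deriv Real.tanh (∑ r, w i r * x r) * x t)
                = (a i) • (Sum.elim
                    (fun v : ↥V => fun x : Fin d → ℝ => Real.tanh (∑ t, (v : Fin d → ℝ) t * x t))
                    (fun q : (↥U × Fin d) => fun x : Fin d → ℝ =>
                      x q.2 * deriv Real.tanh (∑ t, (q.1 : Fin d → ℝ) t * x t))
                    (Sum.inr (⟨-w i, hU1⟩, t))) := by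
              funext x
              show a i * deriv Real.tanh (∑ r, w i r * x r) * x t
                = a i * (x t * deriv Real.tanh (∑ r, (-w i) r * x r))
              rw [hsum_neg, hDeven]; ring
            rw [hkey]
            exact Submodule.smul_mem _ _ (Submodule.subset_span ⟨Sum.inr (⟨-w i, hU1⟩, t), rfl⟩)
    · rcases p with ⟨v, hv⟩ | ⟨⟨u, hu⟩, t⟩
      · rw [Sum.elim_inl]
        have hvP : v ∈ (Pfin : Set (Fin d → ℝ)) := hVsub hv
        rw [hPcoe] at hvP
        obtain ⟨i, hwi, hor⟩ := hvP
        rcases hor with h | h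
        · subst h
          exact Submodule.subset_span ⟨Sum.inl i, rfl⟩
        · subst h
          have hkey : (fun x : Fin d → ℝ => Real.tanh (∑ t, (-w i) t * x t))
              = (-1 : ℝ) • (Sum.elim
                (fun i : Fin m => fun x : Fin d → ℝ => Real.tanh (∑ t, w i t * x t))
                (fun p : Fin m × Fin d => fun x : Fin d → ℝ =>
                  a p.1 * deriv Real.tanh (∑ t, w p.1 t * x t) * x p.2) (Sum.inl i)) := by
            funext x
            show Real.tanh (∑ t, (-w i) t * x t) = -1 * Real.tanh (∑ t, w i t * x t)
            rw [hsum_neg, Real.tanh_neg]; ring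
          show (fun x : Fin d → ℝ => Real.tanh (∑ t, (-w i) t * x t)) ∈ _
          rw [hkey]
          exact Submodule.smul_mem _ _ (Submodule.subset_span ⟨Sum.inl i, rfl⟩)
      · rw [Sum.elim_inr]
        rcases Finset.mem_union.1 hu with h1 | h1
        · have huQ : u ∈ (Qfin : Set (Fin d → ℝ)) := (Finset.mem_filter.1 h1).2
          rw [hQcoe] at huQ
          obtain ⟨i, hwi, hai, hor⟩ := huQ
          rcases hor with h | h
          · subst h
            have hkey : (fun x : Fin d → ℝ =>
                x t * deriv Real.tanh (∑ r, w i r * x r))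
                = (a i)⁻¹ • (Sum.elim
                  (fun i : Fin m => fun x : Fin d → ℝ => Real.tanh (∑ t, w i t * x t))
                  (fun p : Fin m × Fin d => fun x : Fin d → ℝ =>
                    a p.1 * deriv Real.tanh (∑ t, w p.1 t * x t) * x p.2) (Sum.inr (i, t))) := by
              funext x
              show x t * deriv Real.tanh (∑ r, w i r * x r)
                = (a i)⁻¹ * (a i * deriv Real.tanh (∑ r, w i r * x r) * x t)
              field_simp
            show (fun x : Fin d → ℝ => x t * deriv Real.tanh (∑ r, w i r * x r)) ∈ _
            rw [hkey]
            exact Submodule.smul_mem _ _ (Submodule.subset_span ⟨Sum.inr (i, t), rfl⟩)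
          · subst h
            have hkey : (fun x : Fin d → ℝ =>
                x t * deriv Real.tanh (∑ r, (-w i) r * x r))
                = (a i)⁻¹ • (Sum.elim
                  (fun i : Fin m => fun x : Fin d → ℝ => Real.tanh (∑ t, w i t * x t))
                  (fun p : Fin m × Fin d => fun x : Fin d → ℝ =>
                    a p.1 * deriv Real.tanh (∑ t, w p.1 t * x t) * x p.2) (Sum.inr (i, t))) := by
              funext x
              show x t * deriv Real.tanh (∑ r, (-w i) r * x r)
                = (a i)⁻¹ * (a i * deriv Real.tanh (∑ r, w i r * x r) * x t)
              rw [hsum_neg, hDeven]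
              field_simp
            show (fun x : Fin d → ℝ => x t * deriv Real.tanh (∑ r, (-w i) r * x r)) ∈ _
            rw [hkey]
            exact Submodule.smul_mem _ _ (Submodule.subset_span ⟨Sum.inr (i, t), rfl⟩)
        · have hu0 : u = 0 := hZsub0 u h1
          have hcond : ∃ i, w i = 0 ∧ a i ≠ 0 := by
            by_contra h
            rw [hZdef, if_neg h] at h1
            exact Finset.notMem_empty u h1
          obtain ⟨i, hwi, hai⟩ := hcond
          subst hu0
          have hkey : (fun x : Fin d → ℝ =>
              x t * deriv Real.tanh (∑ r, (0 : Fin d → ℝ) r * x r))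
              = (a i)⁻¹ • (Sum.elim
                (fun i : Fin m => fun x : Fin d → ℝ => Real.tanh (∑ t, w i t * x t))
                (fun p : Fin m × Fin d => fun x : Fin d → ℝ =>
                  a p.1 * deriv Real.tanh (∑ t, w p.1 t * x t) * x p.2) (Sum.inr (i, t))) := by
            funext x
            show x t * deriv Real.tanh (∑ r, (0 : Fin d → ℝ) r * x r)
              = (a i)⁻¹ * (a i * deriv Real.tanh (∑ r, w i r * x r) * x t)
            rw [hwi]
            field_simp
          show (fun x : Fin d → ℝ =>
              x t * deriv Real.tanh (∑ r, (0 : Fin d → ℝ) r * x r)) ∈ _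
          rw [hkey]
          exact Submodule.smul_mem _ _ (Submodule.subset_span ⟨Sum.inr (i, t), rfl⟩)
  -- counting
  have hrank : Module.finrank ℝ (Submodule.span ℝ (Set.range
      (Sum.elim
        (fun i : Fin m => fun x : Fin d → ℝ => Real.tanh (∑ t, w i t * x t))
        (fun p : Fin m × Fin d => fun x : Fin d → ℝ =>
          a p.1 * deriv Real.tanh (∑ t, w p.1 t * x t) * x p.2))))
      = V.card + U.card * d := by
    rw [hspan, finrank_span_eq_card hindep]
    simp [Fintype.card_sum, Fintype.card_prod, Fintype.card_coe, Fintype.card_fin]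
  have hQcard : Qfin.card = 2 * VQ.card := by
    have hQdecomp : Qfin = VQ ∪ VQ.image (fun v => -v) := by
      ext q
      constructor
      · intro hq
        rcases hVcov q (hQP hq) with h | h
        · exact Finset.mem_union_left _ (Finset.mem_filter.2 ⟨h, hq⟩)
        · exact Finset.mem_union_right _ (Finset.mem_image.2
            ⟨-q, Finset.mem_filter.2 ⟨h, hQsym q hq⟩, neg_neg q⟩)
      · intro hq
        rcases Finset.mem_union.1 hq with h | h
        · exact (Finset.mem_filter.1 h).2
        · obtain ⟨v', hv', rfl⟩ := Finset.mem_image.1 h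
          exact hQsym v' (Finset.mem_filter.1 hv').2
    rw [hQdecomp, Finset.card_union_of_disjoint, Finset.card_image_of_injective _ neg_injective]
    · ring
    · rw [Finset.disjoint_left]
      intro x hx hx2
      obtain ⟨v', hv', rfl⟩ := Finset.mem_image.1 hx2
      exact hVanti v' (hVQV hv') (hVQV hx)
  have hUcard : U.card = VQ.card + Zfin.card := by
    rw [hUdef, Finset.card_union_of_disjoint]
    rw [Finset.disjoint_left]
    intro x hx hx2
    exact hV0 x (hVQV hx) (hZsub0 x hx2)
  have e1 : Set.ncard {v : Fin d → ℝ | ∃ i, w i ≠ 0 ∧ (v = w i ∨ v = -w i)} = Pfin.card := by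
    rw [← hPcoe, Set.ncard_coe_finset]
  have e2 : Set.ncard {v : Fin d → ℝ | ∃ i, w i ≠ 0 ∧ a i ≠ 0 ∧ (v = w i ∨ v = -w i)}
      = Qfin.card := by
    rw [← hQcoe, Set.ncard_coe_finset]
  have e3 : Set.ncard {v : Fin d → ℝ | ∃ i, w i = 0 ∧ a i ≠ 0 ∧ v = w i} = Zfin.card := by
    rw [← hZcoe, Set.ncard_coe_finset]
  rw [hrank]
  rw [e1]
  rw [e2]
  rw [e3]
  rw [hVcard]
  rw [hQcard]
  rw [hUcard]
  rw [Nat.mul_div_cancel_left _ (by norm_num : (0:ℕ) < 2), Nat.mul_div_cancel_left _ (by norm_num : (0:ℕ) < 2)]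
end
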